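/- arXiv:2404.08470 — 7 statements merged into one kernel-verified Lean document; each statement's English description precedes it below -/
import Mathlib

section
/- For every positive integer n, the sum over all permutations σ of [n] of x^{asc(σ)} equals the sum over all permutations σ of [n] of x^{exc(σ)}, where asc(σ) is the number of indices 1 ≤ i ≤ n−1 with σ(i) < σ(i+1) and exc(σ) is the number of indices i with σ(i) > i. -/
/-!
Complementing the values (`σ ↦ rev ∘ σ`) turns ascents into descents. Foata's fundamental
transformation then turns descents into anti-excedances: cut the word of `σ` before each
left-to-right maximum and read every block as a cycle. Inside a block, `σ(j) ↦ σ(j + 1)`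
is an anti-excedance exactly at a descent, while the step closing a block returns to its first
letter, the block's maximum, which is never an anti-excedance. Inverting turns anti-excedances
into excedances. The transformation is injective because the largest letter of each cycle
opens its block and the blocks appear in the word by increasing maxima, so the word can be
rebuilt position by position from the cycles.
-/

open Finset

/-- The word of a permutation in one-line notation, 1-based positions,
with value 0 outside positions `1..n` (boundary convention). -/
def wrd {n : ℕ} (σ : Equiv.Perm (Fin n)) (i : ℕ) : ℕ :=
  if h : 1 ≤ i ∧ i ≤ n then ((σ ⟨i - 1, by omega⟩ : Fin n) : ℕ) + 1 else 0

/-- Number of ascents of σ: indices 1 ≤ i ≤ n−1 with σ(i) < σ(i+1). -/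
def permAsc {n : ℕ} (σ : Equiv.Perm (Fin n)) : ℕ :=
  ((Finset.Icc 1 (n - 1)).filter fun i => wrd σ i < wrd σ (i + 1)).card

/-- Number of excedances of σ: indices i with σ(i) > i. -/
def permExc {n : ℕ} (σ : Equiv.Perm (Fin n)) : ℕ :=
  (Finset.univ.filter fun i : Fin n => i < σ i).card

namespace Foata

section Word

variable {α : Type*} [LinearOrder α] (w : ℕ → α) {n j k m : ℕ}

def IsLRMax (j : ℕ) : Prop := ∀ k < j, w k < w j

instance : DecidablePred (IsLRMax w) := fun _ => Nat.decidableBallLT _ _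

def blockStart (j : ℕ) : ℕ := Nat.findGreatest (IsLRMax w) j

variable {w}

lemma isLRMax_zero : IsLRMax w 0 := fun _ hk => absurd hk (Nat.not_lt_zero _)

lemma blockStart_le (j : ℕ) : blockStart w j ≤ j := Nat.findGreatest_le j

lemma isLRMax_blockStart (j : ℕ) : IsLRMax w (blockStart w j) :=
  Nat.findGreatest_spec (Nat.zero_le j) isLRMax_zero

lemma le_blockStart (hm : IsLRMax w m) (hmj : m ≤ j) : m ≤ blockStart w j :=
  Nat.le_findGreatest hmj hm

lemma blockStart_eq_self (hj : IsLRMax w j) : blockStart w j = j :=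
  (blockStart_le j).antisymm (le_blockStart hj le_rfl)

lemma not_isLRMax_of_blockStart_lt (h₁ : blockStart w j < m) (h₂ : m ≤ j) : ¬ IsLRMax w m :=
  Nat.findGreatest_is_greatest h₁ h₂

lemma blockStart_succ (hj : ¬ IsLRMax w (j + 1)) : blockStart w (j + 1) = blockStart w j := by
  simp [blockStart, hj]

lemma apply_le_apply_blockStart_of_isLRMax (hj : IsLRMax w j) (hjk : j ≤ k) :
    w j ≤ w (blockStart w k) := by
  rcases (le_blockStart hj hjk).eq_or_lt with heq | hlt
  · rw [← heq]
  · exact (isLRMax_blockStart k j hlt).le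

lemma apply_le_apply_blockStart (j : ℕ) : w j ≤ w (blockStart w j) := by
  induction j using Nat.strong_induction_on with
  | _ j ih =>
    by_cases hj : IsLRMax w j
    · rw [blockStart_eq_self hj]
    · obtain ⟨k, hkj, hwk⟩ : ∃ k < j, w j ≤ w k := by simpa [IsLRMax] using hj
      calc w j ≤ w k := hwk
        _ ≤ w (blockStart w k) := ih k hkj
        _ ≤ w (blockStart w j) := apply_le_apply_blockStart_of_isLRMax
          (isLRMax_blockStart k) ((blockStart_le k).trans hkj.le)

variable (w n)

def IsBlockEnd (j : ℕ) : Prop := j + 1 < n → IsLRMax w (j + 1)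

instance : DecidablePred (IsBlockEnd w n) := fun _ => inferInstanceAs (Decidable (_ → _))

/-- The word is cut into blocks before each left-to-right maximum; `blockSucc` reads each
block as a cycle, the last letter of a block going back to its first. -/
def blockSucc (j : ℕ) : ℕ := if IsBlockEnd w n j then blockStart w j else j + 1

variable {n}

lemma blockSucc_of_not_isBlockEnd (h : ¬ IsBlockEnd w n j) : blockSucc w n j = j + 1 :=
  if_neg h

lemma blockSucc_of_isBlockEnd (h : IsBlockEnd w n j) : blockSucc w n j = blockStart w j :=
  if_pos h

lemma lt_of_not_isBlockEnd (h : ¬ IsBlockEnd w n j) : j + 1 < n := by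
  by_contra h'; exact h fun h'' => absurd h'' h'

lemma blockSucc_lt (hj : j < n) : blockSucc w n j < n := by
  unfold blockSucc; split_ifs with h
  exacts [(blockStart_le j).trans_lt hj, lt_of_not_isBlockEnd w h]

lemma isLRMax_blockSucc_iff : IsLRMax w (blockSucc w n j) ↔ IsBlockEnd w n j := by
  unfold blockSucc; split_ifs with h
  · simpa [h] using isLRMax_blockStart j
  · simp only [h, iff_false]
    exact fun h' => h fun _ => h'

lemma blockSucc_injOn : Set.InjOn (blockSucc w n) (Set.Iio n) := by
  have start_ne {j k : ℕ} (hk : k < n) (hj : IsBlockEnd w n j) (hjk : j < k) :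
      blockStart w j ≠ blockStart w k := by
    have := le_blockStart (hj (by omega)) hjk
    have := blockStart_le (w := w) j
    omega
  intro j hj k hk hjk
  simp only [Set.mem_Iio] at hj hk
  have hend : IsBlockEnd w n j ↔ IsBlockEnd w n k := by
    rw [← isLRMax_blockSucc_iff, ← isLRMax_blockSucc_iff, hjk]
  by_cases hj' : IsBlockEnd w n j
  · rw [blockSucc_of_isBlockEnd w hj', blockSucc_of_isBlockEnd w (hend.1 hj')] at hjk
    by_contra hne
    rcases Nat.lt_or_gt_of_ne hne with hlt | hlt
    exacts [start_ne hk hj' hlt hjk, start_ne hj (hend.1 hj') hlt hjk.symm]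
  · rw [blockSucc_of_not_isBlockEnd w hj', blockSucc_of_not_isBlockEnd w (mt hend.2 hj')] at hjk
    omega

lemma blockStart_blockSucc (j : ℕ) : blockStart w (blockSucc w n j) = blockStart w j := by
  unfold blockSucc; split_ifs with h
  · exact blockStart_eq_self (isLRMax_blockStart j)
  · exact blockStart_succ fun h' => h fun _ => h'

lemma blockStart_iterate_blockSucc (i j : ℕ) :
    blockStart w ((blockSucc w n)^[i] j) = blockStart w j := by
  induction i with
  | zero => rfl
  | succ i ih => rw [Function.iterate_succ_apply', blockStart_blockSucc, ih]

lemma iterate_blockSucc_blockStart (hj : j < n) :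
    (blockSucc w n)^[j - blockStart w j] (blockStart w j) = j := by
  suffices ∀ m, blockStart w j ≤ m → m ≤ j →
      (blockSucc w n)^[m - blockStart w j] (blockStart w j) = m from
    this j (blockStart_le j) le_rfl
  intro m hm
  induction m, hm using Nat.le_induction with
  | base => simp
  | succ m hm ih =>
    intro hmj
    have hnot : ¬ IsBlockEnd w n m := fun h =>
      not_isLRMax_of_blockStart_lt (by omega) hmj (h (by omega))
    rw [show m + 1 - blockStart w j = (m - blockStart w j) + 1 by omega,
      Function.iterate_succ_apply', ih (by omega), blockSucc_of_not_isBlockEnd w hnot]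

variable (n) in
noncomputable def blockCycle : Equiv.Perm (Fin n) :=
  Equiv.ofBijective (fun j => ⟨blockSucc w n j, blockSucc_lt w j.2⟩)
    (Finite.injective_iff_bijective.mp fun j k h =>
      Fin.ext (blockSucc_injOn w j.2 k.2 (congrArg Fin.val h)))

@[simp]
lemma val_blockCycle (j : Fin n) : (blockCycle w n j : ℕ) = blockSucc w n j := rfl

lemma val_blockCycle_pow (i : ℕ) (j : Fin n) :
    ((blockCycle w n ^ i) j : ℕ) = (blockSucc w n)^[i] j := by
  induction i with
  | zero => rfl
  | succ i ih => rw [pow_succ', Equiv.Perm.mul_apply, val_blockCycle, ih,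
      Function.iterate_succ_apply']

lemma sameCycle_blockStart (j : Fin n) :
    (blockCycle w n).SameCycle ⟨blockStart w j, (blockStart_le j).trans_lt j.2⟩ j :=
  ⟨((j - blockStart w j : ℕ) : ℤ), Fin.ext <| by
    rw [zpow_natCast, val_blockCycle_pow]; exact iterate_blockSucc_blockStart w j.2⟩

lemma apply_le_of_sameCycle {j k : Fin n} (h : (blockCycle w n).SameCycle j k) :
    w k ≤ w (blockStart w j) := by
  obtain ⟨i, -, rfl⟩ := h.exists_pow_eq'
  rw [val_blockCycle_pow, ← blockStart_iterate_blockSucc w i j]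
  exact apply_le_apply_blockStart _

lemma apply_blockCycle_lt_iff (j : Fin n) :
    w (blockCycle w n j) < w j ↔ (j : ℕ) + 1 < n ∧ w (j + 1) < w j := by
  rw [val_blockCycle]
  by_cases hj : IsBlockEnd w n j
  · rw [blockSucc_of_isBlockEnd w hj]
    refine iff_of_false (apply_le_apply_blockStart _).not_gt fun ⟨h₁, h₂⟩ => ?_
    exact h₂.not_gt (hj h₁ j (Nat.lt_succ_self _))
  · rw [blockSucc_of_not_isBlockEnd w hj]
    exact (and_iff_right (lt_of_not_isBlockEnd w hj)).symm

end Word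

open Equiv

variable {n : ℕ}

def word (σ : Perm (Fin n)) (j : ℕ) : ℕ := wrd σ (j + 1)

lemma word_apply (σ : Perm (Fin n)) (j : Fin n) : word σ j = σ j + 1 := by
  simp [word, wrd, j.2]

lemma word_lt_word_iff {σ : Perm (Fin n)} {j k : Fin n} : word σ j < word σ k ↔ σ j < σ k := by
  rw [word_apply, word_apply, add_lt_add_iff_right, Fin.val_fin_lt]

lemma word_le_word_iff {σ : Perm (Fin n)} {j k : Fin n} :
    word σ j ≤ word σ k ↔ σ j ≤ σ k := by
  rw [← not_lt, word_lt_word_iff, not_lt]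

/-- Foata's fundamental transformation: the blocks of the word of `σ` become the cycles. -/
noncomputable def foata (σ : Perm (Fin n)) : Perm (Fin n) := σ * blockCycle (word σ) n * σ⁻¹

lemma foata_apply_apply (σ : Perm (Fin n)) (j : Fin n) :
    foata σ (σ j) = σ (blockCycle (word σ) n j) := by
  simp [foata]

lemma sameCycle_foata_apply_iff {σ : Perm (Fin n)} {j k : Fin n} :
    (foata σ).SameCycle (σ j) (σ k) ↔ (blockCycle (word σ) n).SameCycle j k := by
  simp [foata, Perm.sameCycle_conj]

lemma le_of_sameCycle_foata {σ : Perm (Fin n)} {j a : Fin n} (h : (foata σ).SameCycle (σ j) a) :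
    a ≤ σ ⟨blockStart (word σ) j, (blockStart_le _).trans_lt j.2⟩ := by
  rw [← σ.apply_symm_apply a, sameCycle_foata_apply_iff] at h
  rw [← σ.apply_symm_apply a]
  exact word_le_word_iff.1 (apply_le_of_sameCycle _ h)

lemma permAsc_eq_card (σ : Perm (Fin n)) :
    permAsc σ = #{j : Fin n | (j : ℕ) + 1 < n ∧ word σ j < word σ (j + 1)} := by
  refine card_bij (fun i hi => ⟨i - 1, by grind⟩) (fun i hi => ?_) (fun i hi k hk h => ?_)
    (fun j hj => ⟨j + 1, ?_, Fin.ext (by simp)⟩)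
  · simp only [mem_filter, mem_Icc, word] at hi ⊢
    grind
  · simp only [mem_filter, mem_Icc, Fin.mk.injEq] at hi hk h
    omega
  · simp only [mem_filter, mem_Icc, word] at hj ⊢
    grind

def permDes (σ : Perm (Fin n)) : ℕ :=
  #{j : Fin n | (j : ℕ) + 1 < n ∧ word σ (j + 1) < word σ j}

lemma permAsc_revPerm_mul (σ : Perm (Fin n)) : permAsc (Fin.revPerm * σ) = permDes σ := by
  rw [permAsc_eq_card, permDes]
  refine congrArg card (filter_congr fun j _ => and_congr_right fun hj => ?_)
  obtain ⟨k, hk⟩ : ∃ k : Fin n, (k : ℕ) = j + 1 := ⟨⟨_, hj⟩, rfl⟩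
  rw [← hk]
  simp only [word_apply, Perm.mul_apply, Fin.revPerm_apply, Fin.val_rev]
  omega

lemma permExc_inv_conj (σ π : Perm (Fin n)) :
    permExc (σ * π * σ⁻¹)⁻¹ = #{j | σ (π j) < σ j} := by
  refine card_nbij' (fun j => π⁻¹ (σ⁻¹ j)) (fun j => σ (π j)) ?_ ?_ ?_ ?_ <;> intro <;> simp

lemma permExc_inv_foata (σ : Perm (Fin n)) : permExc (foata σ)⁻¹ = permDes σ := by
  rw [foata, permExc_inv_conj, permDes]
  refine congrArg card (filter_congr fun j _ => ?_)
  rw [← word_lt_word_iff, apply_blockCycle_lt_iff]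

lemma exists_foata_apply_apply_eq {σ : Perm (Fin n)} {j : Fin n}
    (hj : ¬ IsLRMax (word σ) j) : ∃ i : Fin n, (i : ℕ) + 1 = j ∧ foata σ (σ i) = σ j := by
  have hj₀ : (j : ℕ) ≠ 0 := fun h => hj (h ▸ isLRMax_zero)
  obtain ⟨i, hij⟩ : ∃ i : Fin n, (i : ℕ) + 1 = j := ⟨⟨j - 1, by omega⟩, by simp; omega⟩
  refine ⟨i, hij, ?_⟩
  rw [foata_apply_apply]
  congr 1
  ext
  rw [val_blockCycle, blockSucc_of_not_isBlockEnd _ fun h => hj (hij ▸ h (hij ▸ j.2)), hij]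

lemma foata_apply_apply_of_isLRMax {σ : Perm (Fin n)} {i j : Fin n} (hij : (i : ℕ) + 1 = j)
    (hj : IsLRMax (word σ) j) :
    foata σ (σ i) = σ ⟨blockStart (word σ) i, (blockStart_le _).trans_lt i.2⟩ := by
  rw [foata_apply_apply]
  congr 1
  ext
  rw [val_blockCycle, blockSucc_of_isBlockEnd]
  exact fun _ => hij ▸ hj

section Injectivity

variable {σ σ' : Perm (Fin n)} (h : foata σ = foata σ') {j : Fin n}
  (hagree : ∀ k < j, σ k = σ' k)
include h hagree

lemma isLRMax_of_foata_eq (hj : IsLRMax (word σ) j) : IsLRMax (word σ') j := by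
  by_contra hj'
  obtain ⟨i, hij, hi⟩ := exists_foata_apply_apply_eq hj'
  have hb : blockStart (word σ) i < j := (blockStart_le i).trans_lt (by omega)
  rw [← hagree i (Fin.lt_def.2 (by omega)), ← h, foata_apply_apply_of_isLRMax hij hj,
    hagree _ (Fin.lt_def.2 hb)] at hi
  exact hb.ne (congrArg Fin.val (σ'.injective hi))

lemma le_of_foata_eq (hj : IsLRMax (word σ) j) (hj' : IsLRMax (word σ') j) : σ j ≤ σ' j := by
  obtain ⟨k, hσk⟩ : ∃ k, σ k = σ' j := σ.surjective _
  have hjk : j ≤ k := by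
    by_contra! hlt
    rw [hagree k hlt] at hσk
    exact hlt.ne (σ'.injective hσk)
  set b : Fin n := ⟨blockStart (word σ) k, (blockStart_le _).trans_lt k.2⟩
  have hjb : σ j ≤ σ b := word_le_word_iff.1 (apply_le_apply_blockStart_of_isLRMax hj hjk)
  -- `σ' j` is the largest letter of its cycle, and that cycle contains `σ b`.
  have hcyc : (foata σ').SameCycle (σ' j) (σ b) := by
    rw [← h, ← hσk]
    exact (sameCycle_foata_apply_iff.2 (sameCycle_blockStart _ k)).symm
  have hbj := le_of_sameCycle_foata hcyc
  simp only [blockStart_eq_self hj'] at hbj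
  exact hjb.trans hbj

end Injectivity

lemma foata_injective : Function.Injective (foata : Perm (Fin n) → Perm (Fin n)) := by
  intro σ σ' h
  refine Equiv.ext fun j => ?_
  induction j using WellFoundedLT.induction with
  | _ j ih =>
    have ih' : ∀ k < j, σ' k = σ k := fun k hk => (ih k hk).symm
    by_cases hj : IsLRMax (word σ) j
    · have hj' := isLRMax_of_foata_eq h ih hj
      exact le_antisymm (le_of_foata_eq h ih hj hj') (le_of_foata_eq h.symm ih' hj' hj)
    · have hj' : ¬ IsLRMax (word σ') j := mt (isLRMax_of_foata_eq h.symm ih') hj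
      obtain ⟨i, hij, hi⟩ := exists_foata_apply_apply_eq hj
      obtain ⟨i', hij', hi'⟩ := exists_foata_apply_apply_eq hj'
      obtain rfl : i = i' := Fin.ext (by omega)
      rw [← hi, ← hi', h, ih i (Fin.lt_def.2 (by omega))]

end Foata

open Foata

theorem eulerian_asc_eq_exc_general (n : ℕ)
    (R : Type*) [CommRing R] (x : R) :
    ∑ σ : Equiv.Perm (Fin n), x ^ permAsc σ =
      ∑ σ : Equiv.Perm (Fin n), x ^ permExc σ := by
  have hbij : Function.Bijective fun σ : Equiv.Perm (Fin n) => (foata σ)⁻¹ :=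
    Finite.injective_iff_bijective.1 (inv_injective.comp foata_injective)
  calc ∑ σ : Equiv.Perm (Fin n), x ^ permAsc σ
      = ∑ σ : Equiv.Perm (Fin n), x ^ permAsc (Fin.revPerm * σ) :=
        (Fintype.sum_bijective _ (Group.mulLeft_bijective Fin.revPerm) _ _ fun _ => rfl).symm
    _ = ∑ σ : Equiv.Perm (Fin n), x ^ permDes σ := by simp only [permAsc_revPerm_mul]
    _ = ∑ σ, x ^ permExc (foata σ)⁻¹ := by simp only [permExc_inv_foata]
    _ = ∑ σ, x ^ permExc σ := Fintype.sum_bijective _ hbij _ _ fun _ => rfl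

/-- For every positive integer n, the ascent and excedance statistics
are equidistributed over the symmetric group. -/
theorem eulerian_asc_eq_exc (n : ℕ) (hn : 0 < n)
    (R : Type*) [CommRing R] (x : R) :
    ∑ σ : Equiv.Perm (Fin n), x ^ permAsc σ =
      ∑ σ : Equiv.Perm (Fin n), x ^ permExc σ :=
  eulerian_asc_eq_exc_general n R x
end

section
/- Define A_{n,k}(α) = Σ over permutations σ of [n+1] with exactly k descents of α^{lmax(σ)+rmax(σ)−2}. Then for 0 ≤ k ≤ n, the recurrence A_{n+1,k}(α) = (k+α) A_{n,k}(α) + (n+1−k+α) A_{n,k−1}(α) holds, with A_{0,0}(α) = 1 and A_{0,−1}(α) = 0. -/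
open Finset
open scoped Classical
noncomputable section

/-- descents of the word σ₁…σₙ -/
def permDes {n : ℕ} (σ : Equiv.Perm (Fin n)) : ℕ :=
  ((Finset.Icc 1 (n - 1)).filter fun i => wrd σ (i + 1) < wrd σ i).card

/-- number of left-to-right maxima -/
def permLmax {n : ℕ} (σ : Equiv.Perm (Fin n)) : ℕ :=
  ((Finset.Icc 1 n).filter fun i => ∀ j ∈ Finset.Ico 1 i, wrd σ j < wrd σ i).card

/-- number of right-to-left maxima -/
def permRmax {n : ℕ} (σ : Equiv.Perm (Fin n)) : ℕ :=
  ((Finset.Icc 1 n).filter fun i => ∀ j ∈ Finset.Icc (i + 1) n, wrd σ j < wrd σ i).card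

/-- A_{n,k}(α) = Σ_{σ ∈ S_{n+1}, des σ = k} α^{lmax σ + rmax σ − 2} -/
def Apoly (R : Type*) [CommRing R] (α : R) (n k : ℕ) : R :=
  ∑ σ ∈ Finset.univ.filter (fun σ : Equiv.Perm (Fin (n + 1)) => permDes σ = k),
    α ^ (permLmax σ + permRmax σ - 2)

/-! Every permutation of `[n + 2]` arises in exactly one way by inserting a new smallest letter
into a permutation `σ` of `[n + 1]`, at one of its `n + 2` slots. Only the front slot creates a
new left-to-right maximum and only the back slot a new right-to-left maximum. The descent number
is unchanged when the new letter goes in front or into a descent of `σ`, and grows by one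
otherwise. So `des σ + 1` slots keep the descent number, with total weight `des σ + α`, and the
other `n - des σ + 1` slots raise it, with total weight `n - des σ + α`. -/

lemma Fin.card_filter_succAbove {n : ℕ} (P : Fin (n + 1) → Prop) [DecidablePred P]
    (p : Fin (n + 1)) : #{i | P i} = #{i | P (p.succAbove i)} + if P p then 1 else 0 := by
  simp only [Finset.card_filter]
  rw [Fin.sum_univ_succAbove _ p, add_comm]

lemma Fin.succAbove_covBy_succAbove_iff {n : ℕ} {p : Fin (n + 1)} {a : Fin n}
    (h : ¬ p.succAbove a ⋖ p) (b : Fin n) : p.succAbove a ⋖ p.succAbove b ↔ a ⋖ b := by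
  simp only [Fin.covBy_iff, Nat.covBy_iff_add_one_eq] at *
  unfold Fin.succAbove at *
  split_ifs at * <;> simp [Fin.lt_def] at * <;> omega

def IsDescent {m : ℕ} (σ : Equiv.Perm (Fin m)) (i : Fin m) : Prop :=
  ∃ j, i ⋖ j ∧ σ j < σ i

section Word

variable {m : ℕ}

lemma wrd_val_add_one (σ : Equiv.Perm (Fin m)) (a : Fin m) : wrd σ (a + 1) = σ a + 1 := by
  simp [wrd]

lemma card_filter_Icc_one (Q : ℕ → Prop) [DecidablePred Q] :
    #{i ∈ Icc 1 m | Q i} = #{a : Fin m | Q (a + 1)} := by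
  symm
  refine card_bij (fun a _ => a + 1) (fun a ha => ?_) (fun a _ b _ h => ?_) (fun i hi => ?_)
  · simp only [mem_filter, mem_univ, true_and] at ha
    simp [ha]
  · exact Fin.ext (by simpa using h)
  · simp only [mem_filter, mem_Icc] at hi
    exact ⟨⟨i - 1, by omega⟩, by simp [show i - 1 + 1 = i by omega, hi.2], by simp; omega⟩

lemma forall_mem_Ico_one_iff (a : Fin m) (P : ℕ → Prop) :
    (∀ j ∈ Ico 1 ((a : ℕ) + 1), P j) ↔ ∀ b : Fin m, b < a → P (b + 1) := by
  refine ⟨fun h b hb => h _ (by rw [Fin.lt_def] at hb; simp only [mem_Ico]; omega),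
    fun h j hj => ?_⟩
  simp only [mem_Ico] at hj
  simpa [show j - 1 + 1 = j by omega] using
    h ⟨j - 1, by omega⟩ (Fin.lt_def.mpr (by dsimp only; omega))

lemma forall_mem_Icc_add_one_iff (a : Fin m) (P : ℕ → Prop) :
    (∀ j ∈ Icc ((a : ℕ) + 1 + 1) m, P j) ↔ ∀ b : Fin m, a < b → P (b + 1) := by
  refine ⟨fun h b hb => h _ (by rw [Fin.lt_def] at hb; simp only [mem_Icc]; omega),
    fun h j hj => ?_⟩
  simp only [mem_Icc] at hj
  simpa [show j - 1 + 1 = j by omega] using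
    h ⟨j - 1, by omega⟩ (Fin.lt_def.mpr (by dsimp only; omega))

lemma permLmax_eq_card (σ : Equiv.Perm (Fin m)) :
    permLmax σ = #{i | ∀ j, j < i → σ j < σ i} := by
  rw [permLmax, card_filter_Icc_one]
  simp only [forall_mem_Ico_one_iff, wrd_val_add_one, add_lt_add_iff_right, Fin.val_fin_lt]

lemma permRmax_eq_card (σ : Equiv.Perm (Fin m)) :
    permRmax σ = #{i | ∀ j, i < j → σ j < σ i} := by
  rw [permRmax, card_filter_Icc_one]
  simp only [forall_mem_Icc_add_one_iff, wrd_val_add_one, add_lt_add_iff_right, Fin.val_fin_lt]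

lemma permDes_eq_card (σ : Equiv.Perm (Fin m)) : permDes σ = #{i | IsDescent σ i} := by
  have hIcc : ((Icc 1 (m - 1)).filter fun i => wrd σ (i + 1) < wrd σ i) =
      (Icc 1 m).filter fun i => i < m ∧ wrd σ (i + 1) < wrd σ i := by
    ext i
    simp only [mem_filter, mem_Icc]
    omega
  rw [permDes, hIcc, card_filter_Icc_one]
  refine congrArg card (filter_congr fun a _ =>
    ⟨fun ⟨ha, hlt⟩ => ?_, fun ⟨b, hab, hb⟩ => ?_⟩)
  · refine ⟨⟨a + 1, ha⟩, by simp [Fin.covBy_iff], ?_⟩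
    rw [show (a : ℕ) + 1 + 1 = (⟨a + 1, ha⟩ : Fin m) + 1 from rfl, wrd_val_add_one,
      wrd_val_add_one] at hlt
    simpa using hlt
  · have hb' : (a : ℕ) + 1 = b := Nat.covBy_iff_add_one_eq.mp (Fin.covBy_iff.mp hab)
    refine ⟨hb' ▸ b.isLt, ?_⟩
    rw [hb', wrd_val_add_one, ← hb', wrd_val_add_one]
    simpa using hb

lemma one_le_permLmax (σ : Equiv.Perm (Fin (m + 1))) : 1 ≤ permLmax σ := by
  rw [permLmax_eq_card]
  exact card_pos.mpr ⟨0, by simp⟩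

lemma one_le_permRmax (σ : Equiv.Perm (Fin (m + 1))) : 1 ≤ permRmax σ := by
  rw [permRmax_eq_card]
  exact card_pos.mpr ⟨Fin.last m, by simp [Fin.le_last]⟩

end Word

section InsertMin

variable {n : ℕ}

def insertMin (σ : Equiv.Perm (Fin (n + 1))) (p : Fin (n + 2)) : Equiv.Perm (Fin (n + 2)) :=
  (finSuccEquiv' p).trans ((Equiv.optionCongr σ).trans (finSuccEquiv (n + 1)).symm)

@[simp] lemma insertMin_apply_self (σ : Equiv.Perm (Fin (n + 1))) (p : Fin (n + 2)) :
    insertMin σ p p = 0 := by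
  simp [insertMin]

@[simp] lemma insertMin_apply_succAbove (σ : Equiv.Perm (Fin (n + 1))) (p : Fin (n + 2))
    (j : Fin (n + 1)) : insertMin σ p (p.succAbove j) = (σ j).succ := by
  simp [insertMin]

lemma insertMin_injective :
    Function.Injective fun x : Equiv.Perm (Fin (n + 1)) × Fin (n + 2) => insertMin x.1 x.2 := by
  rintro ⟨σ, p⟩ ⟨σ', p'⟩ h
  simp only at h
  have hp : p = p' := by
    have h0 : 0 = insertMin σ' p' p := by simpa using congr($h p)
    exact (insertMin σ' p').injective (by rw [← h0, insertMin_apply_self])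
  subst hp
  refine Prod.ext (Equiv.ext fun j => Fin.succ_injective _ ?_) rfl
  simpa using congr($h (p.succAbove j))

lemma insertMin_bijective :
    Function.Bijective fun x : Equiv.Perm (Fin (n + 1)) × Fin (n + 2) => insertMin x.1 x.2 := by
  refine (Fintype.bijective_iff_injective_and_card _).mpr ⟨insertMin_injective, ?_⟩
  simp only [Fintype.card_prod, Fintype.card_perm, Fintype.card_fin, Nat.factorial_succ]
  ring

-- `r₂ j i` selects the positions `j` that `i` is compared with: `j < i` for left-to-right
-- maxima, `i < j` for right-to-left maxima.
lemma card_records_insertMin (σ : Equiv.Perm (Fin (n + 1))) (p : Fin (n + 2))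
    {r₁ : Fin (n + 1) → Fin (n + 1) → Prop} {r₂ : Fin (n + 2) → Fin (n + 2) → Prop}
    [DecidableRel r₁] [DecidableRel r₂]
    (hr : ∀ a b, r₂ (p.succAbove a) (p.succAbove b) ↔ r₁ a b) :
    #{i | ∀ j, r₂ j i → insertMin σ p j < insertMin σ p i} =
      #{i | ∀ j, r₁ j i → σ j < σ i} + if ∀ j, ¬ r₂ j p then 1 else 0 := by
  refine (Fin.card_filter_succAbove _ p).trans ?_
  congr 1
  · refine congrArg card (filter_congr fun i _ => ?_)
    rw [Fin.forall_iff_succAbove p]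
    simp [hr, Fin.succ_pos]
  · simp

lemma permLmax_insertMin (σ : Equiv.Perm (Fin (n + 1))) (p : Fin (n + 2)) :
    permLmax (insertMin σ p) = permLmax σ + if p = 0 then 1 else 0 := by
  rw [permLmax_eq_card, permLmax_eq_card,
    card_records_insertMin σ p fun _ _ => Fin.succAbove_lt_succAbove_iff]
  have hzero : (∀ j, p ≤ j) ↔ p = 0 :=
    ⟨fun h => Fin.le_zero_iff.mp (h 0), by rintro rfl; exact Fin.zero_le⟩
  simp [hzero]

lemma permRmax_insertMin (σ : Equiv.Perm (Fin (n + 1))) (p : Fin (n + 2)) :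
    permRmax (insertMin σ p) = permRmax σ + if p = Fin.last _ then 1 else 0 := by
  rw [permRmax_eq_card, permRmax_eq_card,
    card_records_insertMin σ p (r₁ := fun j i => i < j) (r₂ := fun j i => i < j)
      fun _ _ => Fin.succAbove_lt_succAbove_iff]
  have hlast : (∀ j, j ≤ p) ↔ p = Fin.last _ :=
    ⟨fun h => le_antisymm (Fin.le_last p) (h _), by rintro rfl; exact Fin.le_last⟩
  simp [hlast]

lemma isDescent_insertMin_succAbove (σ : Equiv.Perm (Fin (n + 1))) (p : Fin (n + 2))
    (a : Fin (n + 1)) :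
    IsDescent (insertMin σ p) (p.succAbove a) ↔ IsDescent σ a ∨ p.succAbove a ⋖ p := by
  unfold IsDescent
  rw [Fin.exists_iff_succAbove p]
  by_cases h : p.succAbove a ⋖ p
  · simp [h, Fin.succ_pos]
  · simp [h, Fin.succAbove_covBy_succAbove_iff h]

lemma not_isDescent_insertMin_self (σ : Equiv.Perm (Fin (n + 1))) (p : Fin (n + 2)) :
    ¬ IsDescent (insertMin σ p) p := by
  simp [IsDescent]

lemma permDes_insertMin (σ : Equiv.Perm (Fin (n + 1))) (p : Fin (n + 2)) :
    permDes (insertMin σ p) = #{a | IsDescent σ a ∨ p.succAbove a ⋖ p} := by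
  rw [permDes_eq_card, Fin.card_filter_succAbove _ p]
  simp [isDescent_insertMin_succAbove, not_isDescent_insertMin_self]

lemma permDes_insertMin_zero (σ : Equiv.Perm (Fin (n + 1))) :
    permDes (insertMin σ 0) = permDes σ := by
  rw [permDes_insertMin, permDes_eq_card]
  simp

lemma permDes_insertMin_succ (σ : Equiv.Perm (Fin (n + 1))) (q : Fin (n + 1)) :
    permDes (insertMin σ q.succ) = permDes σ + if IsDescent σ q then 0 else 1 := by
  have hcov : ∀ a, q.succ.succAbove a ⋖ q.succ ↔ a = q := by
    have hq : q.succ.succAbove q ⋖ q.succ := by simp [Fin.covBy_iff]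
    exact fun a => ⟨fun h => Fin.succAbove_right_injective (h.unique_left hq),
      by rintro rfl; exact hq⟩
  have hins : univ.filter (fun a => IsDescent σ a ∨ a = q) =
      insert q (univ.filter (IsDescent σ)) := by
    ext a
    simp [or_comm]
  rw [permDes_insertMin, permDes_eq_card]
  simp only [hcov, hins, card_insert_eq_ite, mem_filter, mem_univ, true_and]
  split_ifs <;> rfl

lemma not_isDescent_last (σ : Equiv.Perm (Fin (n + 1))) : ¬ IsDescent σ (Fin.last n) :=
  fun ⟨j, hj, _⟩ => (Fin.le_last j).not_gt hj.lt

lemma card_isDescent_castSucc (σ : Equiv.Perm (Fin (n + 1))) :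
    #{j : Fin n | IsDescent σ j.castSucc} = permDes σ := by
  rw [permDes_eq_card, Fin.card_filter_succAbove _ (Fin.last n)]
  simp [not_isDescent_last]

variable {R : Type*} [CommRing R]

lemma pow_permLmax_add_permRmax_insertMin (α : R) (σ : Equiv.Perm (Fin (n + 1)))
    (p : Fin (n + 2)) :
    α ^ (permLmax (insertMin σ p) + permRmax (insertMin σ p) - 2) =
      α ^ ((if p = 0 then 1 else 0) + if p = Fin.last _ then 1 else 0) *
        α ^ (permLmax σ + permRmax σ - 2) := by
  rw [permLmax_insertMin, permRmax_insertMin, ← pow_add]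
  have := one_le_permLmax σ
  have := one_le_permRmax σ
  congr 1
  split_ifs <;> omega

lemma sum_apply_permDes_insertMin_castSucc (g : ℕ → R) (σ : Equiv.Perm (Fin (n + 1))) :
    ∑ j : Fin n, g (permDes (insertMin σ j.castSucc.succ)) =
      permDes σ * g (permDes σ) + ((n - permDes σ : ℕ) : R) * g (permDes σ + 1) := by
  simp only [permDes_insertMin_succ, apply_ite, add_zero]
  have hcard := card_filter_add_card_filter_not (s := univ) fun j : Fin n => IsDescent σ j.castSucc
  rw [card_isDescent_castSucc, card_univ, Fintype.card_fin] at hcard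
  rw [sum_ite, sum_const, sum_const, card_isDescent_castSucc, nsmul_eq_mul, nsmul_eq_mul,
    show #{j : Fin n | ¬ IsDescent σ j.castSucc} = n - permDes σ by omega]

lemma sum_insertMin (α : R) (g : ℕ → R) (σ : Equiv.Perm (Fin (n + 1))) :
    ∑ p, g (permDes (insertMin σ p)) *
        α ^ (permLmax (insertMin σ p) + permRmax (insertMin σ p) - 2) =
      (((permDes σ : R) + α) * g (permDes σ) +
          (((n - permDes σ : ℕ) : R) + α) * g (permDes σ + 1)) *
        α ^ (permLmax σ + permRmax σ - 2) := by
  have h0 : Fin.last (n + 1) ≠ 0 := Fin.last_pos'.ne'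
  have hmid : ∀ j : Fin n, j.castSucc.succ ≠ Fin.last (n + 1) := fun j h =>
    Fin.castSucc_ne_last j (Fin.succ_injective _ (h.trans (Fin.succ_last n).symm))
  rw [Fin.sum_univ_succ, Fin.sum_univ_castSucc, permDes_insertMin_zero,
    permDes_insertMin_succ σ (Fin.last n), if_neg (not_isDescent_last σ)]
  simp only [pow_permLmax_add_permRmax_insertMin, Fin.succ_last, Fin.succ_ne_zero, h0, h0.symm,
    hmid, if_true, if_false, add_zero, zero_add, pow_zero, pow_one, one_mul]
  rw [← sum_mul, sum_apply_permDes_insertMin_castSucc]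
  ring

end InsertMin

section Apoly

variable {R : Type*} [CommRing R]

lemma Apoly_zero_zero (α : R) : Apoly R α 0 0 = 1 := by
  simp [Apoly, permDes_eq_card, permLmax_eq_card, permRmax_eq_card, IsDescent]

lemma Apoly_succ_eq_sum (α : R) (n k : ℕ) :
    Apoly R α (n + 1) k = ∑ σ : Equiv.Perm (Fin (n + 1)),
      (((permDes σ : R) + α) * (if permDes σ = k then 1 else 0) +
          (((n - permDes σ : ℕ) : R) + α) * (if permDes σ + 1 = k then 1 else 0)) *
        α ^ (permLmax σ + permRmax σ - 2) := by
  let g : ℕ → R := fun d => if d = k then 1 else 0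
  calc Apoly R α (n + 1) k
      = ∑ τ, g (permDes τ) * α ^ (permLmax τ + permRmax τ - 2) := by
        simp only [Apoly, sum_filter, g, ite_mul, one_mul, zero_mul]
    _ = ∑ x : Equiv.Perm (Fin (n + 1)) × Fin (n + 2), g (permDes (insertMin x.1 x.2)) *
          α ^ (permLmax (insertMin x.1 x.2) + permRmax (insertMin x.1 x.2) - 2) :=
        (Fintype.sum_bijective _ insertMin_bijective _ _ fun _ => rfl).symm
    _ = _ := by
        rw [Fintype.sum_prod_type]
        exact sum_congr rfl fun σ _ => sum_insertMin α g σ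

lemma ite_Apoly_pred_eq_sum (α : R) (n k : ℕ) :
    (if k = 0 then 0 else Apoly R α n (k - 1)) =
      ∑ σ ∈ univ.filter (fun σ : Equiv.Perm (Fin (n + 1)) => permDes σ + 1 = k),
        α ^ (permLmax σ + permRmax σ - 2) := by
  cases k with
  | zero => simp
  | succ k => simp [Apoly]

end Apoly

/-- The recurrence A_{n+1,k} = (k+α)A_{n,k} + (n+1−k+α)A_{n,k−1},
with A_{0,0} = 1 and A_{0,−1} = 0. -/
theorem Apoly_recurrence (R : Type*) [CommRing R] (α : R) :
    Apoly R α 0 0 = 1 ∧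
    ∀ n k : ℕ, k ≤ n →
      Apoly R α (n + 1) k =
        ((k : R) + α) * Apoly R α n k +
          (((n + 1 - k : ℕ) : R) + α) * (if k = 0 then 0 else Apoly R α n (k - 1)) := by
  refine ⟨Apoly_zero_zero α, fun n k _ => ?_⟩
  rw [Apoly_succ_eq_sum, ite_Apoly_pred_eq_sum, Apoly, sum_filter, sum_filter, mul_sum, mul_sum,
    ← sum_add_distrib]
  refine sum_congr rfl fun σ _ => ?_
  split_ifs <;> subst_vars
  · omega
  · ring
  · rw [Nat.add_sub_add_right]
    ring
  · simp
end
end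

section
/- Let E_n(x) = Σ_{σ ∈ A_n^1} x^{des(σ)} be the descent polynomial of André permutations of the first kind of [n]. Then for n ≥ 0, E_{n+2}(x) = E_{n+1}(x) + x · Σ_{j=1}^{n} C(n,j) E_j(x) E_{n+1−j}(x). -/
open Finset
open scoped Classical
noncomputable section

/-- André words of the first kind (recursive definition). -/
inductive IsAndre1 : List ℕ → Prop
  | nil : IsAndre1 []
  | node (v v' : List ℕ) (m : ℕ)
      (hmin : ∀ a ∈ v ++ v', m < a)
      (hv : IsAndre1 v) (hv' : IsAndre1 v')
      (hmax : v = [] ∨ ∃ M ∈ v', ∀ a ∈ v, a < M) :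
      IsAndre1 (v ++ m :: v')

def IsAndrePerm1 {n : ℕ} (σ : Equiv.Perm (Fin n)) : Prop :=
  IsAndre1 (List.ofFn fun i : Fin n => ((σ i : Fin n) : ℕ) + 1)

/-- E_m(x): descent polynomial of André permutations of the first kind of [m]. -/
def Epoly (R : Type*) [CommRing R] (x : R) (m : ℕ) : R :=
  ∑ σ ∈ Finset.univ.filter (fun σ : Equiv.Perm (Fin m) => IsAndrePerm1 σ),
    x ^ permDes σ

/-!
Splitting an André permutation of `[n+2]` at its minimal letter `1` as `v·1·v'` is a bijection
onto the triples `(T, v, v')` where `T ⊆ {2, …, n+1}` is the letter set of `v`, `v` is an André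
word on `T` and `v'` an André word on the remaining letters of `{2, …, n+2}`: the requirement
that `max(vv') = n + 2` be a letter of `v'` says exactly that `T` avoids `n + 2`. The descents of
`v·1·v'` are those of `v` and of `v'`, plus one when `v` is nonempty. Being André and the number
of descents only depend on the relative order of the letters, so the descent polynomial of André
words on any `k`-element set is `E_k`, and grouping the triples by `#T = j` gives the recurrence.
-/

theorem IsAndre1.map {l : List ℕ} (h : IsAndre1 l) {f : ℕ → ℕ}
    (hf : StrictMonoOn f {a | a ∈ l}) : IsAndre1 (l.map f) := by
  induction h with
  | nil => exact .nil
  | node v v' m hmin _ _ hmax ihv ihv' =>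
    have hlt : ∀ {a b}, a ∈ v ++ m :: v' → b ∈ v ++ m :: v' → (f a < f b ↔ a < b) :=
      hf.lt_iff_lt
    rw [List.map_append, List.map_cons]
    refine .node _ _ _ ?_ (ihv (hf.mono fun a ha => by simp_all))
      (ihv' (hf.mono fun a ha => by simp_all)) ?_
    · simp only [← List.map_append, List.forall_mem_map]
      exact fun a ha => (hlt (by simp) (by simp at ha ⊢; tauto)).2 (hmin a ha)
    · refine hmax.imp (by simp) fun ⟨M, hM, hvM⟩ => ⟨f M, List.mem_map_of_mem hM, ?_⟩
      simp only [List.forall_mem_map]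
      exact fun a ha => (hlt (by simp_all) (by simp_all)).2 (hvM a ha)

namespace Andre

def des : List ℕ → ℕ
  | a :: b :: t => des (b :: t) + if b < a then 1 else 0
  | _ => 0

theorem des_cons_cons (a b : ℕ) (t : List ℕ) :
    des (a :: b :: t) = des (b :: t) + if b < a then 1 else 0 := rfl

theorem des_map {f : ℕ → ℕ} :
    ∀ {l : List ℕ}, StrictMonoOn f {a | a ∈ l} → des (l.map f) = des l
  | [], _ | [_], _ => rfl
  | a :: b :: t, hf => by
    have hbt : StrictMonoOn f {c | c ∈ b :: t} := hf.mono fun c hc => List.mem_cons_of_mem a hc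
    have hba : f b < f a ↔ b < a := hf.lt_iff_lt (by simp) (by simp)
    change des (f a :: f b :: t.map f) = _
    rw [des_cons_cons, ← List.map_cons, des_map hbt, des_cons_cons]
    simp only [hba]

theorem des_cons_of_forall_lt {m : ℕ} {w : List ℕ} (hw : ∀ a ∈ w, m < a) :
    des (m :: w) = des w := by
  cases w with
  | nil => rfl
  | cons c t => simp [des_cons_cons, (hw c List.mem_cons_self).not_gt]

theorem des_append_cons {m : ℕ} {w : List ℕ} (hw : ∀ a ∈ w, m < a) :
    ∀ {v : List ℕ}, (∀ a ∈ v, m < a) →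
      des (v ++ m :: w) = des v + des w + if v = [] then 0 else 1
  | [], _ => by simp [des_cons_of_forall_lt hw, des]
  | [a], hv => by
    simp [des_cons_cons, des_cons_of_forall_lt hw, hv a List.mem_cons_self, des]
  | a :: b :: t, hv => by
    rw [List.cons_append, List.cons_append, des_cons_cons, ← List.cons_append,
      des_append_cons hw fun c hc => hv c (List.mem_cons_of_mem a hc), des_cons_cons]
    simp only [reduceCtorEq, if_false]
    ring

theorem card_filter_getD_lt_eq_des : ∀ l : List ℕ,
    #{i ∈ range (l.length - 1) | l.getD (i + 1) 0 < l.getD i 0} = des l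
  | [] | [_] => rfl
  | a :: b :: t => by
    rw [des_cons_cons, ← card_filter_getD_lt_eq_des (b :: t), card_filter, card_filter]
    simp only [List.length_cons, Nat.add_sub_cancel]
    rw [sum_range_succ']
    simp

def andreWords (s : Finset ℕ) : Finset (List ℕ) := s.val.lists.toFinset.filter IsAndre1

theorem mem_andreWords {s : Finset ℕ} {l : List ℕ} :
    l ∈ andreWords s ↔ l.Nodup ∧ l.toFinset = s ∧ IsAndre1 l := by
  rw [andreWords, mem_filter, Multiset.mem_toFinset, Multiset.mem_lists_iff,
    Multiset.quot_mk_to_coe, ← and_assoc]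
  refine and_congr_left' ⟨fun h => ?_, ?_⟩
  · have hl : l.Nodup := Multiset.coe_nodup.1 (h ▸ s.nodup)
    exact ⟨hl, Finset.val_inj.1 (by rw [List.toFinset_val, hl.dedup, h])⟩
  · rintro ⟨hl, rfl⟩
    rw [List.toFinset_val, hl.dedup]

theorem map_mem_andreWords {s : Finset ℕ} {f : ℕ → ℕ} (hf : StrictMonoOn f s) {l : List ℕ}
    (hl : l ∈ andreWords s) : l.map f ∈ andreWords (s.image f) := by
  obtain ⟨hnd, rfl, hA⟩ := mem_andreWords.1 hl
  rw [List.coe_toFinset] at hf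
  refine mem_andreWords.2 ⟨hnd.map_on fun a ha b hb => hf.injOn ha hb, ?_, hA.map hf⟩
  ext
  simp

theorem mem_of_mem_andreWords {s : Finset ℕ} {l : List ℕ} (hl : l ∈ andreWords s) {a : ℕ}
    (ha : a ∈ l) : a ∈ s :=
  (mem_andreWords.1 hl).2.1 ▸ List.mem_toFinset.2 ha

theorem exists_strictMonoOn_image_eq_Icc (s : Finset ℕ) :
    ∃ f : ℕ → ℕ, StrictMonoOn f s ∧ s.image f = Icc 1 #s := by
  let rank a := #{b ∈ s | b ≤ a}
  have hrank : StrictMonoOn rank s := fun a _ b hb hab =>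
    card_lt_card <| (ssubset_iff_of_subset fun c hc => by simp_all [hab.le.trans']).2
      ⟨b, by simpa using hb, by simp [hab]⟩
  refine ⟨rank, hrank, eq_of_subset_of_card_le (fun r hr => ?_) ?_⟩
  · obtain ⟨a, ha, rfl⟩ := mem_image.1 hr
    exact mem_Icc.2 ⟨card_pos.2 ⟨a, by simp [ha]⟩, card_filter_le _ _⟩
  · rw [card_image_of_injOn hrank.injOn, Nat.card_Icc, Nat.add_sub_cancel]

section DescentSum

variable {R : Type*} [CommSemiring R] (x : R)

def andreDesSum (s : Finset ℕ) : R := ∑ l ∈ andreWords s, x ^ des l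

theorem andreDesSum_image {s : Finset ℕ} {f : ℕ → ℕ} (hf : StrictMonoOn f s) :
    andreDesSum x (s.image f) = andreDesSum x s := by
  set g := Function.invFunOn f s
  have hgf : ∀ a ∈ s, g (f a) = a := fun a ha => hf.injOn.leftInvOn_invFunOn ha
  have hfg : ∀ b ∈ s.image f, f (g b) = b := fun b hb =>
    Function.invFunOn_eq (by simpa using hb)
  have hg : StrictMonoOn g (s.image f) := by
    simp only [StrictMonoOn, coe_image, Set.forall_mem_image]
    intro a ha b hb hab
    rwa [hgf a ha, hgf b hb, ← hf.lt_iff_lt ha hb]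
  have hgs : (s.image f).image g = s := by
    rw [image_image]
    exact (image_congr (g := id) fun a ha => hgf a ha).trans image_id
  symm
  refine sum_nbij' (List.map f) (List.map g) (fun l hl => map_mem_andreWords hf hl)
    (fun l hl => hgs ▸ map_mem_andreWords hg hl) (fun l hl => ?_) (fun l hl => ?_) fun l hl => ?_
  · rw [List.map_map]
    exact (List.map_congr_left (g := id) fun a ha => hgf a (mem_of_mem_andreWords hl ha)).trans
      l.map_id
  · rw [List.map_map]
    exact (List.map_congr_left (g := id) fun a ha => hfg a (mem_of_mem_andreWords hl ha)).trans
      l.map_id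
  · rw [des_map (hf.mono fun _ => mem_of_mem_andreWords hl)]

theorem andreDesSum_eq_Icc (s : Finset ℕ) :
    andreDesSum x s = andreDesSum x (Icc 1 #s) := by
  obtain ⟨f, hf, hfs⟩ := exists_strictMonoOn_image_eq_Icc s
  rw [← hfs, andreDesSum_image x hf]

theorem andreDesSum_empty : andreDesSum x ∅ = 1 := by
  have : andreWords ∅ = {[]} := by
    ext l
    simp only [mem_andreWords, List.toFinset_eq_empty_iff, mem_singleton]
    exact ⟨fun h => h.2.1, by rintro rfl; exact ⟨List.nodup_nil, rfl, .nil⟩⟩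
  simp [andreDesSum, this, des]

theorem append_one_cons_mem_andreWords {n : ℕ} {t : Finset ℕ} (ht : t ⊆ Icc 2 (n + 1))
    {a b : List ℕ} (ha : a ∈ andreWords t) (hb : b ∈ andreWords (Icc 2 (n + 2) \ t)) :
    a ++ 1 :: b ∈ andreWords (Icc 1 (n + 2)) := by
  obtain ⟨hnda, rfl, hAa⟩ := mem_andreWords.1 ha
  obtain ⟨hndb, hbset, hAb⟩ := mem_andreWords.1 hb
  have hmema : ∀ c ∈ a, 2 ≤ c ∧ c ≤ n + 1 := fun c hc =>
    mem_Icc.1 (ht (List.mem_toFinset.2 hc))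
  have hmemb : ∀ c, c ∈ b ↔ (2 ≤ c ∧ c ≤ n + 2) ∧ c ∉ a := fun c => by
    simpa using Finset.ext_iff.1 hbset c
  refine mem_andreWords.2 ⟨?_, ?_, .node a b 1 ?_ hAa hAb (.inr ⟨n + 2, ?_, ?_⟩)⟩
  · rw [List.nodup_middle, List.nodup_cons, List.nodup_append]
    refine ⟨fun h => ?_, hnda, hndb, fun c hca c' hcb => ?_⟩
    · rcases List.mem_append.1 h with h | h
      · exact absurd (hmema 1 h).1 (by norm_num)
      · exact absurd ((hmemb 1).1 h).1.1 (by norm_num)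
    · rintro rfl
      exact ((hmemb c).1 hcb).2 hca
  · ext c
    simp only [List.mem_toFinset, List.mem_append, List.mem_cons, hmemb, mem_Icc]
    constructor
    · rintro (h | rfl | h)
      · have := hmema c h; omega
      · omega
      · omega
    · intro hc
      by_cases hca : c ∈ a
      · exact .inl hca
      · by_cases hc1 : c = 1
        · exact .inr (.inl hc1)
        · exact .inr (.inr ⟨by omega, hca⟩)
  · intro c hc
    rcases List.mem_append.1 hc with h | h
    · have := hmema c h; omega
    · have := (hmemb c).1 h; omega
  · exact (hmemb _).2 ⟨by omega, fun h => by have := hmema _ h; omega⟩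
  · intro c hc
    have := hmema c hc
    omega

theorem exists_eq_append_one_cons {n : ℕ} {l : List ℕ} (hl : l ∈ andreWords (Icc 1 (n + 2))) :
    ∃ a b : List ℕ, a.toFinset ⊆ Icc 2 (n + 1) ∧ a ∈ andreWords a.toFinset ∧
      b ∈ andreWords (Icc 2 (n + 2) \ a.toFinset) ∧ l = a ++ 1 :: b := by
  obtain ⟨hnd, hset, hA⟩ := mem_andreWords.1 hl
  have hmem : ∀ c, c ∈ l ↔ 1 ≤ c ∧ c ≤ n + 2 := fun c => by
    simpa using Finset.ext_iff.1 hset c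
  cases hA with
  | nil => exact absurd ((hmem 1).2 ⟨le_rfl, by omega⟩) List.not_mem_nil
  | node v v' m hmin hv hv' hmax =>
    have hm : m = 1 := by
      have h1 := (hmem 1).2 ⟨le_rfl, by omega⟩
      have hm := (hmem m).1 (by simp)
      by_contra hne
      simp only [List.mem_append, List.mem_cons] at h1
      have := hmin 1 (List.mem_append.2 (h1.imp_right fun h => h.resolve_left (Ne.symm hne)))
      omega
    subst hm
    rw [List.nodup_middle, List.nodup_cons, List.nodup_append] at hnd
    obtain ⟨-, hndv, hndv', hdisj⟩ := hnd
    refine ⟨v, v', fun c hc => ?_, mem_andreWords.2 ⟨hndv, rfl, hv⟩,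
      mem_andreWords.2 ⟨hndv', ?_, hv'⟩, rfl⟩
    · rw [List.mem_toFinset] at hc
      obtain ⟨M, hM, hvM⟩ := hmax.resolve_left (List.ne_nil_of_mem hc)
      have := hmin c (by simp [hc])
      have := (hmem M).1 (by simp [hM])
      have := hvM c hc
      exact mem_Icc.2 ⟨by omega, by omega⟩
    · ext c
      simp only [List.mem_toFinset, mem_sdiff, mem_Icc]
      constructor
      · intro hc
        have := hmin c (by simp [hc])
        have := (hmem c).1 (by simp [hc])
        exact ⟨⟨by omega, by omega⟩, fun h => hdisj c h c hc rfl⟩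
      · rintro ⟨hc, hcv⟩
        have := (hmem c).2 ⟨by omega, hc.2⟩
        simp only [List.mem_append, List.mem_cons] at this
        exact (this.resolve_left hcv).resolve_left (by omega)

theorem des_append_one_cons {n : ℕ} {t : Finset ℕ} (ht : t ⊆ Icc 2 (n + 1)) {a b : List ℕ}
    (ha : a ∈ andreWords t) (hb : b ∈ andreWords (Icc 2 (n + 2) \ t)) :
    des (a ++ 1 :: b) = des a + des b + if t = ∅ then 0 else 1 := by
  obtain ⟨-, rfl, -⟩ := mem_andreWords.1 ha
  simp only [List.toFinset_eq_empty_iff]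
  refine des_append_cons (fun c hc => ?_) fun c hc => ?_
  · have := mem_Icc.1 (mem_sdiff.1 (mem_of_mem_andreWords hb hc)).1; omega
  · have := mem_Icc.1 (ht (List.mem_toFinset.2 hc)); omega

theorem andreDesSum_Icc_one_eq_sum_powerset (n : ℕ) :
    andreDesSum x (Icc 1 (n + 2)) = ∑ t ∈ (Icc 2 (n + 1)).powerset,
      (if t = ∅ then 1 else x) * andreDesSum x t * andreDesSum x (Icc 2 (n + 2) \ t) := by
  have hsplit : ∀ t : Finset ℕ,
      (if t = ∅ then 1 else x) * andreDesSum x t * andreDesSum x (Icc 2 (n + 2) \ t) =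
        ∑ p ∈ andreWords t ×ˢ andreWords (Icc 2 (n + 2) \ t),
          (if t = ∅ then 1 else x) * x ^ des p.1 * x ^ des p.2 := fun t => by
    rw [andreDesSum, andreDesSum, mul_sum (s := andreWords t), sum_mul_sum, ← sum_product']
  rw [sum_congr rfl fun t _ => hsplit t, sum_sigma']
  symm
  refine sum_bij (fun p _ => p.2.1 ++ 1 :: p.2.2) (fun ⟨t, a, b⟩ hp => ?_)
    (fun ⟨t, a, b⟩ hp ⟨t', a', b'⟩ hp' h => ?_) (fun l hl => ?_) fun ⟨t, a, b⟩ hp => ?_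
    <;> simp only [mem_sigma, mem_powerset, mem_product] at *
  · exact append_one_cons_mem_andreWords hp.1 hp.2.1 hp.2.2
  · have h1a : 1 ∉ a := fun h1 => by
      have := mem_Icc.1 (hp.1 (mem_of_mem_andreWords hp.2.1 h1)); omega
    have h1b : 1 ∉ b := fun h1 => by
      have := mem_Icc.1 (mem_sdiff.1 (mem_of_mem_andreWords hp.2.2 h1)).1; omega
    obtain ⟨rfl, -, rfl⟩ := (List.append_cons_inj_of_notMem h1a h1b).1 h
    rw [← (mem_andreWords.1 hp.2.1).2.1, ← (mem_andreWords.1 hp'.2.1).2.1]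
  · obtain ⟨a, b, ht, ha, hb, rfl⟩ := exists_eq_append_one_cons hl
    exact ⟨⟨a.toFinset, a, b⟩, ⟨ht, ha, hb⟩, rfl⟩
  · rw [des_append_one_cons hp.1 hp.2.1 hp.2.2, pow_add, pow_add]
    split_ifs <;> ring

end DescentSum

def permWord {m : ℕ} (σ : Equiv.Perm (Fin m)) : List ℕ := List.ofFn fun i => (σ i : ℕ) + 1

theorem wrd_add_one {m : ℕ} (σ : Equiv.Perm (Fin m)) (i : ℕ) :
    wrd σ (i + 1) = (permWord σ).getD i 0 := by
  by_cases hi : i < m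
  · simp [wrd, permWord, hi, Nat.succ_le_of_lt hi]
  · simp [wrd, permWord, hi, Nat.not_le.2 (Nat.lt_succ_of_le (Nat.not_lt.1 hi))]

theorem sum_Icc_one_eq_sum_range {M : Type*} [AddCommMonoid M] (f : ℕ → M) (k : ℕ) :
    ∑ i ∈ Icc 1 k, f i = ∑ i ∈ range k, f (i + 1) := by
  rw [range_eq_Ico, sum_Ico_add', zero_add, Ico_add_one_right_eq_Icc]

theorem permDes_eq_des {m : ℕ} (σ : Equiv.Perm (Fin m)) : permDes σ = des (permWord σ) := by
  rw [permDes, card_filter, sum_Icc_one_eq_sum_range, ← card_filter,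
    ← card_filter_getD_lt_eq_des, permWord, List.length_ofFn]
  simp only [wrd_add_one, permWord]

theorem permWord_injective {m : ℕ} : Function.Injective (permWord (m := m)) := fun _ _ h =>
  Equiv.ext fun i => Fin.ext <| Nat.succ_injective <| congrFun (List.ofFn_injective h) i

theorem permWord_mem_andreWords {m : ℕ} {σ : Equiv.Perm (Fin m)} (hσ : IsAndrePerm1 σ) :
    permWord σ ∈ andreWords (Icc 1 m) := by
  refine mem_andreWords.2
    ⟨List.nodup_ofFn.2 fun i j h => σ.injective (Fin.ext (by simpa using h)), ?_, hσ⟩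
  ext a
  simp only [permWord, List.mem_toFinset, List.mem_ofFn, mem_Icc]
  refine ⟨fun ⟨i, hi⟩ => hi ▸ ⟨by omega, (σ i).isLt⟩,
    fun ⟨h1, hm⟩ => ⟨σ.symm ⟨a - 1, by omega⟩, ?_⟩⟩
  simp only [Equiv.apply_symm_apply]
  omega

theorem exists_permWord_eq {m : ℕ} {l : List ℕ} (hl : l ∈ andreWords (Icc 1 m)) :
    ∃ σ : Equiv.Perm (Fin m), IsAndrePerm1 σ ∧ permWord σ = l := by
  obtain ⟨hnd, hset, hA⟩ := mem_andreWords.1 hl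
  have hlen : l.length = m := by
    rw [← List.toFinset_card_of_nodup hnd, hset, Nat.card_Icc, Nat.add_sub_cancel]
  have hbound : ∀ i (hi : i < l.length), 1 ≤ l[i] ∧ l[i] ≤ m := fun i _ =>
    mem_Icc.1 (mem_of_mem_andreWords hl (List.getElem_mem _))
  let φ : Fin m → Fin m := fun i =>
    ⟨l[(i : ℕ)]'(by omega) - 1, by have := hbound i (by omega); omega⟩
  have hφ : Function.Injective φ := fun i j h => by
    have := hbound i (by omega); have := hbound j (by omega)
    have h' : l[(i : ℕ)]'(by omega) - 1 = l[(j : ℕ)]'(by omega) - 1 := congrArg Fin.val h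
    exact Fin.ext <| (hnd.getElem_inj_iff (hi := by omega) (hj := by omega)).1 (by omega)
  let σ := Equiv.ofBijective φ (Finite.injective_iff_bijective.1 hφ)
  have hσ : permWord σ = l := List.ext_getElem (by simp [permWord, hlen]) fun i _ hi => by
    have := hbound i hi
    simp only [permWord, List.getElem_ofFn, σ, φ, Equiv.ofBijective_apply]
    omega
  exact ⟨σ, by rwa [IsAndrePerm1, ← permWord, hσ], hσ⟩

section Epoly

variable {R : Type*} [CommRing R] (x : R)

theorem Epoly_eq_andreDesSum (m : ℕ) : Epoly R x m = andreDesSum x (Icc 1 m) := by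
  refine sum_bij (fun σ _ => permWord σ)
    (fun _ hσ => permWord_mem_andreWords (mem_filter.1 hσ).2)
    (fun _ _ _ _ h => permWord_injective h) (fun l hl => ?_) fun σ _ => by rw [permDes_eq_des]
  obtain ⟨σ, hσ, rfl⟩ := exists_permWord_eq hl
  exact ⟨σ, mem_filter.2 ⟨mem_univ σ, hσ⟩, rfl⟩

theorem andreDesSum_eq_Epoly_card (s : Finset ℕ) : andreDesSum x s = Epoly R x #s := by
  rw [andreDesSum_eq_Icc, Epoly_eq_andreDesSum]

theorem Epoly_zero : Epoly R x 0 = 1 := by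
  rw [Epoly_eq_andreDesSum, Icc_eq_empty (by norm_num), andreDesSum_empty]

end Epoly

end Andre

open Andre in
/-- E_{n+2}(x) = E_{n+1}(x) + x Σ_{j=1}^n C(n,j) E_j(x) E_{n+1−j}(x). -/
theorem andre_descent_polynomial_recurrence
    (R : Type*) [CommRing R] (x : R) (n : ℕ) :
    Epoly R x (n + 2) =
      Epoly R x (n + 1) +
        x * ∑ j ∈ Finset.Icc 1 n, (n.choose j : R) * Epoly R x j * Epoly R x (n + 1 - j) := by
  have hterm : ∀ t ∈ (Icc 2 (n + 1)).powerset,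
      (if t = ∅ then 1 else x) * andreDesSum x t * andreDesSum x (Icc 2 (n + 2) \ t) =
        (if #t = 0 then 1 else x) * Epoly R x #t * Epoly R x (n + 1 - #t) := fun t ht => by
    have hsub : t ⊆ Icc 2 (n + 2) := (mem_powerset.1 ht).trans (Icc_subset_Icc_right (by omega))
    rw [andreDesSum_eq_Epoly_card, andreDesSum_eq_Epoly_card, card_sdiff_of_subset hsub,
      Nat.card_Icc, show n + 2 + 1 - 2 = n + 1 by omega]
    simp only [card_eq_zero]
  rw [Epoly_eq_andreDesSum, andreDesSum_Icc_one_eq_sum_powerset, sum_congr rfl hterm,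
    sum_powerset_apply_card fun j => (if j = 0 then 1 else x) * Epoly R x j * Epoly R x (n + 1 - j),
    Nat.card_Icc, show n + 1 + 1 - 2 = n by omega, sum_range_succ', sum_Icc_one_eq_sum_range,
    mul_sum]
  simp [Epoly_zero, add_comm, mul_assoc, mul_left_comm]
end
end

section
/- There is a bijection φ on S_n such that for every permutation σ of [n], (exc-hat, drop, fix-hat)(σ) = (basc, des, suc)(φ(σ)) and φ(σ)(1) = σ(1), where exc-hat(σ) counts indices i ≥ 2 with σ(i) > i, fix-hat(σ) counts indices i ≥ 2 with σ(i) = i, drop(σ) counts indices with σ(i) < i, basc(τ) counts indices i ∈ [n−1] with τ(i+1) ≥ τ(i)+2, des(τ) counts indices i with τ(i) > τ(i+1), and suc(τ) counts indices i with τ(i+1) = τ(i)+1. -/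
open Finset

/-- number of excedances at positions i ≥ 2 (1-based), i.e. σ(i) > i with i ≥ 2 -/
def permExcHat {n : ℕ} (σ : Equiv.Perm (Fin n)) : ℕ :=
  (Finset.univ.filter fun i : Fin n => 1 ≤ (i : ℕ) ∧ i < σ i).card

/-- number of fixed points at positions i ≥ 2 (1-based) -/
def permFixHat {n : ℕ} (σ : Equiv.Perm (Fin n)) : ℕ :=
  (Finset.univ.filter fun i : Fin n => 1 ≤ (i : ℕ) ∧ σ i = i).card

/-- number of drops: σ(i) < i -/
def permDrop {n : ℕ} (σ : Equiv.Perm (Fin n)) : ℕ :=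
  (Finset.univ.filter fun i : Fin n => σ i < i).card

/-- number of big ascents: i ∈ [n−1] with σ(i+1) ≥ σ(i) + 2 -/
def permBasc {n : ℕ} (σ : Equiv.Perm (Fin n)) : ℕ :=
  ((Finset.Icc 1 (n - 1)).filter fun i => wrd σ i + 2 ≤ wrd σ (i + 1)).card

/-- number of successions: i ∈ [n−1] with σ(i+1) = σ(i) + 1 -/
def permSuc {n : ℕ} (σ : Equiv.Perm (Fin n)) : ℕ :=
  ((Finset.Icc 1 (n - 1)).filter fun i => wrd σ (i + 1) = wrd σ i + 1).card

/-!
Put `π = σ * finRotate n`, the permutation with one-line word `σ₂ … σₙ σ₁`. Shifting indices turns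
exc-hat and fix-hat of `σ` into the numbers of `x` with `π x ≥ x + 2` and `π x = x + 1`, and
`drop σ + 1` into the number of `x` with `π x ≤ x` (the extra one is `x = n`).

We use the variant of Foata's transformation that writes each cycle as `π m, π² m, …, m` with `m`
its largest element and lists the cycles by decreasing `m`: the word `τ` sorts the letters by the
key (`m` reversed, position in the cycle). Inside a cycle a letter `x` is followed by `π x`, and the
last letter `m` of a cycle is larger than everything after it. Hence the ascents `x y` of `τ` are
exactly the letters with `x < π x`, with `y = π x`, the descents are the letters with `π x ≤ x`
except the final one, and `τ` begins with `π n = σ₁`. The cycle maxima are the right-to-left maxima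
of `τ`, so the cycles, and with them `π`, can be read off from `τ`: the map is injective.
-/

def IsRightMax {n : ℕ} {α : Type*} [LT α] (w : Fin n → α) (i : Fin n) : Prop :=
  ∀ j, i < j → w j < w i

lemma isRightMax_last {n : ℕ} {α : Type*} [Preorder α] (w : Fin (n + 1) → α) :
    IsRightMax w (Fin.last n) :=
  fun j hj => absurd hj (Fin.le_last j).not_gt

/-- `p` starts the block ending at `i`, blocks being closed by the positions in `R`. -/
def IsBlockStart {n : ℕ} (R : Fin (n + 1) → Prop) (i p : Fin (n + 1)) : Prop :=
  p ≤ i ∧ (∀ j : Fin n, j.succ = p → R j.castSucc) ∧ ∀ q, p ≤ q → q < i → ¬R q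

lemma IsBlockStart.eq {n : ℕ} {R : Fin (n + 1) → Prop} {i p p' : Fin (n + 1)}
    (h : IsBlockStart R i p) (h' : IsBlockStart R i p') : p = p' := by
  by_contra hne
  wlog hlt : p < p' generalizing p p'
  · exact this h' h (Ne.symm hne) ((not_lt.1 hlt).lt_of_ne (Ne.symm hne))
  obtain ⟨j, rfl⟩ : ∃ j : Fin n, j.succ = p' :=
    Fin.exists_succ_eq.2 ((Fin.zero_le p).trans_lt hlt).ne'
  exact h.2.2 j.castSucc (Fin.le_castSucc_iff.2 hlt) (j.castSucc_lt_succ.trans_le h'.1)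
    (h'.2.1 j rfl)

namespace Equiv.Perm

section CycleOrder

variable {α : Type*} [Fintype α] [LinearOrder α] (π : Perm α)

def cycleMax (x : α) : α :=
  ({y | π.SameCycle x y} : Finset α).max' ⟨x, by simpa using SameCycle.rfl⟩

variable {π} {x y : α}

lemma sameCycle_cycleMax (x : α) : π.SameCycle x (π.cycleMax x) :=
  (Finset.mem_filter.1 (Finset.max'_mem _ _)).2

lemma le_cycleMax_of_sameCycle (h : π.SameCycle x y) : y ≤ π.cycleMax x :=
  Finset.le_max' _ _ (by simpa using h)

lemma le_cycleMax (x : α) : x ≤ π.cycleMax x := le_cycleMax_of_sameCycle .rfl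

lemma apply_le_cycleMax (x : α) : π x ≤ π.cycleMax x :=
  le_cycleMax_of_sameCycle (sameCycle_apply_right.2 .rfl)

lemma SameCycle.cycleMax_eq (h : π.SameCycle x y) : π.cycleMax x = π.cycleMax y :=
  le_antisymm (le_cycleMax_of_sameCycle (h.symm.trans (sameCycle_cycleMax x)))
    (le_cycleMax_of_sameCycle (h.trans (sameCycle_cycleMax y)))

lemma cycleMax_apply (x : α) : π.cycleMax (π x) = π.cycleMax x :=
  (sameCycle_apply_right.2 SameCycle.rfl).cycleMax_eq.symm

lemma cycleMax_cycleMax (x : α) : π.cycleMax (π.cycleMax x) = π.cycleMax x :=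
  (sameCycle_cycleMax x).cycleMax_eq.symm

variable (π) in
lemma exists_pow_succ_cycleMax_eq (x : α) : ∃ d : ℕ, (π ^ (d + 1)) (π.cycleMax x) = x := by
  obtain ⟨i, hi, -, h⟩ := (sameCycle_cycleMax x).symm.exists_pow_eq''
  exact ⟨i - 1, by rwa [Nat.sub_add_cancel hi]⟩

variable (π) in
def cyclePos (x : α) : ℕ := Nat.find (π.exists_pow_succ_cycleMax_eq x)

lemma pow_cyclePos_succ (x : α) : (π ^ (π.cyclePos x + 1)) (π.cycleMax x) = x :=
  Nat.find_spec (π.exists_pow_succ_cycleMax_eq x)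

lemma pow_succ_cycleMax_ne_of_lt_cyclePos {d : ℕ} (hd : d < π.cyclePos x) :
    (π ^ (d + 1)) (π.cycleMax x) ≠ x :=
  Nat.find_min (π.exists_pow_succ_cycleMax_eq x) hd

lemma cyclePos_apply_cycleMax (x : α) : π.cyclePos (π (π.cycleMax x)) = 0 :=
  (Nat.find_eq_zero _).2 (by rw [cycleMax_apply, cycleMax_cycleMax, pow_one])

lemma cyclePos_apply (hx : π.cycleMax x ≠ x) : π.cyclePos (π x) = π.cyclePos x + 1 := by
  refine (Nat.find_eq_iff _).2 ⟨?_, fun d hd h => ?_⟩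
  · rw [cycleMax_apply, pow_succ', mul_apply, pow_cyclePos_succ]
  · rw [cycleMax_apply, pow_succ', mul_apply, π.injective.eq_iff] at h
    rcases d with _ | d
    · exact hx (by simpa using h)
    · exact pow_succ_cycleMax_ne_of_lt_cyclePos (by omega) h

lemma cyclePos_lt_cyclePos_cycleMax (hx : π.cycleMax x ≠ x) :
    π.cyclePos x < π.cyclePos (π.cycleMax x) := by
  set D := π.cyclePos (π.cycleMax x)
  have hperiod : (π ^ (D + 1)) (π.cycleMax x) = π.cycleMax x := by
    simpa only [cycleMax_cycleMax] using pow_cyclePos_succ (π := π) (π.cycleMax x)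
  by_contra! hD
  have h := pow_cyclePos_succ (π := π) x
  rw [show π.cyclePos x + 1 = π.cyclePos x - D + (D + 1) by omega, pow_add, mul_apply,
    hperiod] at h
  rcases hd : π.cyclePos x - D with _ | d
  · exact hx (by simpa [hd] using h)
  · exact pow_succ_cycleMax_ne_of_lt_cyclePos (by omega) (hd ▸ h)

variable (π) in
def foataKey (x : α) : αᵒᵈ ×ₗ ℕ := toLex (OrderDual.toDual (π.cycleMax x), π.cyclePos x)

lemma foataKey_lt_foataKey : π.foataKey x < π.foataKey y ↔
    π.cycleMax y < π.cycleMax x ∨ π.cycleMax x = π.cycleMax y ∧ π.cyclePos x < π.cyclePos y := by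
  simp [foataKey, Prod.Lex.toLex_lt_toLex]

lemma foataKey_le_foataKey : π.foataKey x ≤ π.foataKey y ↔
    π.cycleMax y < π.cycleMax x ∨ π.cycleMax x = π.cycleMax y ∧ π.cyclePos x ≤ π.cyclePos y := by
  simp [foataKey, Prod.Lex.toLex_le_toLex]

lemma foataKey_injective : Function.Injective π.foataKey := by
  intro x y h
  simp only [foataKey, toLex_inj, Prod.mk.injEq, OrderDual.toDual_inj] at h
  rw [← pow_cyclePos_succ (π := π) x, ← pow_cyclePos_succ (π := π) y, h.1, h.2]

lemma foataKey_lt_apply (hx : π.cycleMax x ≠ x) : π.foataKey x < π.foataKey (π x) :=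
  foataKey_lt_foataKey.2 (.inr ⟨(cycleMax_apply x).symm, by rw [cyclePos_apply hx]; omega⟩)

lemma foataKey_apply_le_of_lt (hx : π.cycleMax x ≠ x) (h : π.foataKey x < π.foataKey y) :
    π.foataKey (π x) ≤ π.foataKey y := by
  rw [foataKey_le_foataKey, cycleMax_apply, cyclePos_apply hx]
  rcases foataKey_lt_foataKey.1 h with h | ⟨h, h'⟩
  exacts [.inl h, .inr ⟨h, h'⟩]

lemma foataKey_apply_le_of_cycleMax_eq (hx : π.cycleMax x = x) (hy : π.cycleMax y ≤ x) :
    π.foataKey (π x) ≤ π.foataKey y := by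
  rw [foataKey_le_foataKey, cycleMax_apply, hx]
  rcases hy.lt_or_eq with hy | hy
  · exact .inl hy
  · refine .inr ⟨hy.symm, ?_⟩
    rw [← hx, cyclePos_apply_cycleMax]
    exact Nat.zero_le _

lemma cycleMax_le_of_foataKey_le (h : π.foataKey x ≤ π.foataKey y) :
    π.cycleMax y ≤ π.cycleMax x := by
  rcases foataKey_le_foataKey.1 h with h | ⟨h, -⟩
  exacts [h.le, h.ge]

end CycleOrder

section Foata

variable {n : ℕ} (π : Perm (Fin n))

def foata : Perm (Fin n) := Tuple.sort π.foataKey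

variable {π}

lemma foataKey_foata_strictMono : StrictMono (π.foataKey ∘ π.foata) :=
  (Tuple.monotone_sort _).strictMono_of_injective (foataKey_injective.comp π.foata.injective)

lemma foataKey_foata_lt_iff {i j : Fin n} :
    π.foataKey (π.foata i) < π.foataKey (π.foata j) ↔ i < j :=
  foataKey_foata_strictMono.lt_iff_lt

lemma foataKey_foata_le_iff {i j : Fin n} :
    π.foataKey (π.foata i) ≤ π.foataKey (π.foata j) ↔ i ≤ j :=
  foataKey_foata_strictMono.le_iff_le

lemma foata_lt_of_cycleMax_eq {i j : Fin n} (hi : π.cycleMax (π.foata i) = π.foata i)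
    (hij : i < j) : π.foata j < π.foata i :=
  ((le_cycleMax _).trans (hi ▸ cycleMax_le_of_foataKey_le (foataKey_foata_le_iff.2 hij.le))
    ).lt_of_ne (π.foata.injective.ne hij.ne')

lemma isRightMax_foata_iff {i : Fin n} :
    IsRightMax π.foata i ↔ π.cycleMax (π.foata i) = π.foata i := by
  refine ⟨fun hi => ?_, fun hi j => foata_lt_of_cycleMax_eq hi⟩
  by_contra hx
  set m := π.cycleMax (π.foata i)
  have hkey : π.foataKey (π.foata i) < π.foataKey (π.foata (π.foata.symm m)) := by
    rw [apply_symm_apply]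
    exact foataKey_lt_foataKey.2
      (.inr ⟨(cycleMax_cycleMax _).symm, cyclePos_lt_cyclePos_cycleMax hx⟩)
  have hlt := hi _ (foataKey_foata_lt_iff.1 hkey)
  rw [apply_symm_apply] at hlt
  exact hlt.not_ge (le_cycleMax _)

end Foata

section FoataSucc

variable {n : ℕ} {π : Perm (Fin (n + 1))}

lemma cycleMax_last : π.cycleMax (Fin.last n) = Fin.last n :=
  le_antisymm (Fin.le_last _) (le_cycleMax _)

lemma foata_zero : π.foata 0 = π (Fin.last n) := by
  apply foataKey_injective (π := π)
  refine le_antisymm ?_ (foataKey_apply_le_of_cycleMax_eq cycleMax_last (Fin.le_last _))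
  rw [← π.foata.apply_symm_apply (π (Fin.last n))]
  exact foataKey_foata_le_iff.2 (Fin.zero_le _)

lemma foata_succ_eq_apply {j : Fin n}
    (hj : π.cycleMax (π.foata j.castSucc) ≠ π.foata j.castSucc) :
    π.foata j.succ = π (π.foata j.castSucc) := by
  apply foataKey_injective (π := π)
  refine le_antisymm ?_ (foataKey_apply_le_of_lt hj (foataKey_foata_lt_iff.2 j.castSucc_lt_succ))
  rw [← π.foata.apply_symm_apply (π _)]
  refine foataKey_foata_le_iff.2
    (Fin.castSucc_lt_iff_succ_le.1 ((foataKey_foata_lt_iff (π := π)).1 ?_))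
  rw [apply_symm_apply]
  exact foataKey_lt_apply hj

lemma apply_foata_last_le : π (π.foata (Fin.last n)) ≤ π.foata (Fin.last n) :=
  (apply_le_cycleMax _).trans_eq (isRightMax_foata_iff.1 (isRightMax_last _))

lemma foata_succ_eq_of_lt {j : Fin n} (h : π.foata j.castSucc < π.foata j.succ) :
    π.foata j.succ = π (π.foata j.castSucc) :=
  foata_succ_eq_apply fun hmax => (foata_lt_of_cycleMax_eq hmax j.castSucc_lt_succ).not_gt h

lemma foata_castSucc_lt_succ_iff {j : Fin n} :
    π.foata j.castSucc < π.foata j.succ ↔ π.foata j.castSucc < π (π.foata j.castSucc) := by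
  refine ⟨fun h => foata_succ_eq_of_lt h ▸ h, fun h => ?_⟩
  rwa [foata_succ_eq_apply fun hmax => (h.trans_le ((apply_le_cycleMax _).trans_eq hmax)).false]

lemma isBlockStart_foata {i : Fin (n + 1)} (hi : IsRightMax π.foata i) :
    IsBlockStart (IsRightMax π.foata) i (π.foata.symm (π (π.foata i))) := by
  have hmax := isRightMax_foata_iff.1 hi
  set p := π.foata.symm (π (π.foata i))
  have hp : π.foata p = π (π.foata i) := apply_symm_apply _ _
  have hpi : p ≤ i := by
    rw [← foataKey_foata_le_iff (π := π), hp]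
    exact foataKey_apply_le_of_cycleMax_eq hmax hmax.le
  refine ⟨hpi, fun j hj => ?_, fun q hpq hqi hq => ?_⟩
  · rw [isRightMax_foata_iff]
    by_contra hj'
    have h := foata_succ_eq_apply hj'
    rw [hj, hp, π.injective.eq_iff] at h
    exact (j.castSucc_lt_succ.trans_le (hj ▸ hpi)).ne' (π.foata.injective h)
  · have hq' := isRightMax_foata_iff.1 hq
    have hle : π.foata q ≤ π.foata i := calc
      π.foata q = π.cycleMax (π.foata q) := hq'.symm
      _ ≤ π.cycleMax (π (π.foata i)) := by
        rw [← hp]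
        exact cycleMax_le_of_foataKey_le (foataKey_foata_le_iff.2 hpq)
      _ = π.foata i := by rw [cycleMax_apply, hmax]
    have hge : π.foata i ≤ π.foata q := calc
      π.foata i = π.cycleMax (π.foata i) := hmax.symm
      _ ≤ π.cycleMax (π.foata q) := cycleMax_le_of_foataKey_le (foataKey_foata_le_iff.2 hqi.le)
      _ = π.foata q := hq'
    exact hqi.ne (π.foata.injective (le_antisymm hle hge))

lemma apply_foata_castSucc {j : Fin n}
    (hj : ¬IsRightMax π.foata j.castSucc) : π (π.foata j.castSucc) = π.foata j.succ :=
  (foata_succ_eq_apply (isRightMax_foata_iff.not.1 hj)).symm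

end FoataSucc

theorem foata_injective {n : ℕ} :
    Function.Injective (foata : Perm (Fin (n + 1)) → Perm (Fin (n + 1))) := by
  intro π₁ π₂ h
  ext1 x
  obtain ⟨i, rfl⟩ := π₂.foata.surjective x
  by_cases hi : IsRightMax π₂.foata i
  · have h₁ := isBlockStart_foata (h ▸ hi)
    rw [h] at h₁
    exact π₂.foata.symm.injective (h₁.eq (isBlockStart_foata hi))
  · obtain ⟨j, rfl⟩ := (Fin.exists_castSucc_eq (i := i)).2 fun hl => hi (hl ▸ isRightMax_last _)
    have h₁ := apply_foata_castSucc (π := π₁) (h ▸ hi)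
    rw [h] at h₁
    rw [h₁, apply_foata_castSucc hi]

noncomputable def foataEquiv (n : ℕ) : Perm (Fin (n + 1)) ≃ Perm (Fin (n + 1)) :=
  Equiv.ofBijective foata (Finite.injective_iff_bijective.1 foata_injective)

@[simp]
lemma foataEquiv_apply {n : ℕ} (π : Perm (Fin (n + 1))) : foataEquiv n π = π.foata := rfl

end Equiv.Perm

open Equiv Equiv.Perm

section Statistics

variable {n : ℕ}

lemma wrd_succ (τ : Perm (Fin n)) (i : Fin n) : wrd τ (i + 1) = τ i + 1 := by
  simp [wrd, i.isLt]

lemma wrd_one (τ : Perm (Fin (n + 1))) : wrd τ 1 = τ 0 + 1 :=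
  wrd_succ τ 0

lemma card_filter_wrd (τ : Perm (Fin (n + 1))) (P : ℕ → ℕ → Prop) [DecidableRel P] :
    ((Icc 1 n).filter fun i => P (wrd τ i) (wrd τ (i + 1))).card =
      #{j : Fin n | P (τ j.castSucc + 1) (τ j.succ + 1)} := by
  have hw (j : Fin n) : P (wrd τ (j + 1)) (wrd τ (j + 1 + 1)) ↔
      P (τ j.castSucc + 1) (τ j.succ + 1) := by
    rw [← wrd_succ τ j.castSucc, ← wrd_succ τ j.succ]
    rfl
  symm
  refine card_bij (fun j _ => (j : ℕ) + 1) (fun j hj => ?_)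
    (fun j _ k _ h => Fin.ext (by simpa using h)) (fun i hi => ?_)
  · simp only [mem_filter, mem_univ, true_and, mem_Icc] at hj ⊢
    exact ⟨⟨by omega, j.isLt⟩, (hw j).2 hj⟩
  · simp only [mem_filter, mem_Icc] at hi
    obtain ⟨⟨hi1, hin⟩, hP⟩ := hi
    obtain ⟨k, rfl⟩ : ∃ k, i = k + 1 := ⟨i - 1, by omega⟩
    exact ⟨⟨k, by omega⟩, mem_filter.2 ⟨mem_univ _, (hw ⟨k, by omega⟩).1 hP⟩, rfl⟩

lemma card_filter_mul_finRotate (σ : Perm (Fin (n + 1)))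
    (Q : Fin (n + 1) → Fin (n + 1) → Prop) [DecidableRel Q] :
    #{x | Q x ((σ * finRotate (n + 1)) x)} =
      #{j : Fin n | Q j.castSucc (σ j.succ)} + if Q (Fin.last n) (σ 0) then 1 else 0 := by
  rw [card_filter, card_filter, Fin.sum_univ_castSucc]
  simp [finRotate_apply, Fin.coeSucc_eq_succ]

section FoataCounts

variable {π : Perm (Fin (n + 1))}

lemma card_filter_foata_ascents (P : Fin (n + 1) → Fin (n + 1) → Prop) [DecidableRel P]
    (hP : ∀ a b, P a b → a < b) :
    #{j : Fin n | P (π.foata j.castSucc) (π.foata j.succ)} = #{x | P x (π x)} := by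
  rw [card_filter, card_filter, ← Equiv.sum_comp π.foata, Fin.sum_univ_castSucc,
    if_neg fun h => (hP _ _ h).not_ge apply_foata_last_le, add_zero]
  refine sum_congr rfl fun j _ => if_congr ⟨fun h => ?_, fun h => ?_⟩ rfl rfl
  · rwa [← foata_succ_eq_of_lt (hP _ _ h)]
  · rwa [foata_succ_eq_of_lt (foata_castSucc_lt_succ_iff.2 (hP _ _ h))]

lemma card_filter_foata_descents :
    #{j : Fin n | π.foata j.succ < π.foata j.castSucc} + 1 = #{x | π x ≤ x} := by
  rw [card_filter, card_filter, ← Equiv.sum_comp π.foata, Fin.sum_univ_castSucc,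
    if_pos apply_foata_last_le]
  refine congrArg (· + 1) (sum_congr rfl fun j _ => if_congr ?_ rfl rfl)
  have hne := π.foata.injective.ne j.castSucc_lt_succ.ne
  rw [iff_comm, ← not_lt, ← foata_castSucc_lt_succ_iff, not_lt]
  exact ⟨fun h => h.lt_of_ne hne.symm, le_of_lt⟩

end FoataCounts

lemma permBasc_foata (π : Perm (Fin (n + 1))) :
    permBasc π.foata = #{x : Fin (n + 1) | (x : ℕ) + 2 ≤ π x} := by
  rw [permBasc, Nat.add_sub_cancel, card_filter_wrd _ fun a b => a + 2 ≤ b,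
    ← card_filter_foata_ascents (fun a b => (a : ℕ) + 2 ≤ b) fun a b h => Fin.lt_def.2 (by omega)]
  simp

lemma permSuc_foata (π : Perm (Fin (n + 1))) :
    permSuc π.foata = #{x : Fin (n + 1) | (π x : ℕ) = x + 1} := by
  rw [permSuc, Nat.add_sub_cancel, card_filter_wrd _ fun a b => b = a + 1,
    ← card_filter_foata_ascents (fun a b => (b : ℕ) = a + 1) fun a b h => Fin.lt_def.2 (by omega)]
  simp

lemma permDes_foata (π : Perm (Fin (n + 1))) :
    permDes π.foata + 1 = #{x : Fin (n + 1) | π x ≤ x} := by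
  rw [permDes, Nat.add_sub_cancel, card_filter_wrd _ fun a b => b < a,
    ← card_filter_foata_descents]
  simp

lemma permExcHat_eq (σ : Perm (Fin (n + 1))) :
    permExcHat σ = #{x : Fin (n + 1) | (x : ℕ) + 2 ≤ (σ * finRotate (n + 1)) x} := by
  rw [permExcHat, Fin.card_filter_univ_succ',
    card_filter_mul_finRotate σ fun a b => (a : ℕ) + 2 ≤ b, if_neg (by simp),
    if_neg (by have := (σ 0).isLt; simp; omega), zero_add, add_zero]
  refine congrArg card (filter_congr fun j _ => ?_)
  simp [Fin.lt_def]
  omega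

lemma permFixHat_eq (σ : Perm (Fin (n + 1))) :
    permFixHat σ = #{x : Fin (n + 1) | ((σ * finRotate (n + 1)) x : ℕ) = x + 1} := by
  rw [permFixHat, Fin.card_filter_univ_succ',
    card_filter_mul_finRotate σ fun a b => (b : ℕ) = a + 1, if_neg (by simp),
    if_neg (by simpa using (σ 0).isLt.ne), zero_add, add_zero]
  refine congrArg card (filter_congr fun j _ => ?_)
  simp [Fin.ext_iff]

lemma permDrop_eq (σ : Perm (Fin (n + 1))) :
    permDrop σ + 1 = #{x : Fin (n + 1) | (σ * finRotate (n + 1)) x ≤ x} := by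
  rw [permDrop, Fin.card_filter_univ_succ', card_filter_mul_finRotate σ fun a b => b ≤ a,
    if_neg (Fin.not_lt_zero _), if_pos (Fin.le_last _), zero_add]
  refine congrArg (card · + 1) (filter_congr fun j _ => ?_)
  simp [Fin.lt_def, Fin.le_def]

end Statistics

/-- There is a bijection φ on S_n fixing the first letter and sending
(exc-hat, drop, fix-hat) to (basc, des, suc). -/
theorem succession_bijection (n : ℕ) :
    ∃ φ : Equiv.Perm (Fin n) ≃ Equiv.Perm (Fin n),
      ∀ σ : Equiv.Perm (Fin n),
        wrd (φ σ) 1 = wrd σ 1 ∧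
        permExcHat σ = permBasc (φ σ) ∧
        permDrop σ = permDes (φ σ) ∧
        permFixHat σ = permSuc (φ σ) := by
  cases n with
  | zero =>
    exact ⟨Equiv.refl _, fun σ => by
      simp [wrd, permExcHat, permBasc, permDrop, permDes, permFixHat, permSuc]⟩
  | succ n =>
    refine ⟨(Equiv.mulRight (finRotate (n + 1))).trans (foataEquiv n), fun σ => ?_⟩
    simp only [Equiv.trans_apply, Equiv.coe_mulRight, foataEquiv_apply]
    refine ⟨?_, by rw [permExcHat_eq, permBasc_foata], ?_, by rw [permFixHat_eq, permSuc_foata]⟩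
    · rw [wrd_one, wrd_one, foata_zero, mul_apply, finRotate_last]
    · exact Nat.add_right_cancel ((permDrop_eq σ).trans (permDes_foata _).symm)
end

section
/- Define F_n(x,y,t|α) = Σ_{σ ∈ S_n} x^{exc-hat(σ)} y^{drop(σ)} t^{fix-hat(σ)} α^{cyc(σ)}, where exc-hat counts excedances at positions i ≥ 2, fix-hat counts fixed points i ≥ 2, drop counts drops, and cyc counts cycles. Then for every n ≥ 0, x · F_{n+1}(x,y,t|α) = A^{cyc}_{n+1}(x,y,t|α) + α(x−t) · A^{cyc}_n(x,y,t|α), where A^{cyc}_m(x,y,t|α) = Σ_{σ ∈ S_m} x^{exc σ} y^{drop σ} t^{fix σ} α^{cyc σ} and A^{cyc}_0 = 1. -/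
open Finset

def permFix {n : ℕ} (σ : Equiv.Perm (Fin n)) : ℕ :=
  (Finset.univ.filter fun i : Fin n => σ i = i).card

/-- number of cycles (including fixed points) -/
def permCyc {n : ℕ} (σ : Equiv.Perm (Fin n)) : ℕ :=
  σ.cycleType.card + permFix σ

/-- A_m^{cyc}(x,y,t|α) -/
def Acyc (R : Type*) [CommRing R] (x y t α : R) (m : ℕ) : R :=
  ∑ σ : Equiv.Perm (Fin m),
    x ^ permExc σ * y ^ permDrop σ * t ^ permFix σ * α ^ permCyc σ

/-- F_n(x,y,t|α) -/
def Fpoly (R : Type*) [CommRing R] (x y t α : R) (m : ℕ) : R :=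
  ∑ σ : Equiv.Perm (Fin m),
    x ^ permExcHat σ * y ^ permDrop σ * t ^ permFixHat σ * α ^ permCyc σ


/-!
Split `S_{n+1}` according to whether `σ` fixes `1` (here `0 : Fin (n + 1)`). If it does not,
position `1` is an excedance, so `x · x^{exc-hat σ} = x^{exc σ}` and the two weights of `σ`
agree. If it does, then `exc σ = exc-hat σ` and `fix σ = fix-hat σ + 1`, so the two weights
differ by `(x - t)` times the hatted weight. Such `σ` are the permutations of `{2, …, n+1}`
with an extra fixed point, which adds one cycle, so their hatted weights sum to `α · A^{cyc}_n`.
-/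

open Equiv

section Statistics

variable {n : ℕ}

theorem permExc_eq_ite_add_permExcHat (σ : Perm (Fin (n + 1))) :
    permExc σ = (if 0 < σ 0 then 1 else 0) + permExcHat σ := by
  rw [permExc, permExcHat, card_filter, card_filter, Fin.sum_univ_succ, Fin.sum_univ_succ]
  simp

theorem permFix_eq_ite_add_permFixHat (σ : Perm (Fin (n + 1))) :
    permFix σ = (if σ 0 = 0 then 1 else 0) + permFixHat σ := by
  rw [permFix, permFixHat, card_filter, card_filter, Fin.sum_univ_succ, Fin.sum_univ_succ]
  simp

def extendFixingZero (e : Perm (Fin n)) : Perm (Fin (n + 1)) :=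
  e.extendDomain (finSuccAboveEquiv (0 : Fin (n + 1)))

@[simp]
theorem extendFixingZero_zero (e : Perm (Fin n)) : extendFixingZero e 0 = 0 :=
  e.extendDomain_apply_not_subtype _ (by simp)

@[simp]
theorem extendFixingZero_succ (e : Perm (Fin n)) (j : Fin n) :
    extendFixingZero e j.succ = (e j).succ := by
  simpa [finSuccAboveEquiv_apply, extendFixingZero] using
    e.extendDomain_apply_image (finSuccAboveEquiv (0 : Fin (n + 1))) j

theorem decomposeFin_symm_zero_eq_extendFixingZero (e : Perm (Fin n)) :
    Perm.decomposeFin.symm ((0 : Fin (n + 1)), e) = extendFixingZero e := by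
  ext b
  cases b using Fin.cases with
  | zero => rw [Perm.decomposeFin_symm_apply_zero, extendFixingZero_zero]
  | succ j => rw [Perm.decomposeFin_symm_apply_succ, extendFixingZero_succ, swap_self, refl_apply]

theorem sum_filter_apply_zero_eq_zero {M : Type*} [AddCommMonoid M] (g : Perm (Fin (n + 1)) → M) :
    ∑ σ with σ 0 = 0, g σ = ∑ e : Perm (Fin n), g (extendFixingZero e) := by
  rw [sum_filter, ← Perm.decomposeFin.symm.sum_comp, Fintype.sum_prod_type, Fin.sum_univ_succ]
  simp [decomposeFin_symm_zero_eq_extendFixingZero, Fin.succ_ne_zero]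

theorem permExcHat_extendFixingZero (e : Perm (Fin n)) :
    permExcHat (extendFixingZero e) = permExc e := by
  rw [permExcHat, permExc, card_filter, card_filter, Fin.sum_univ_succ]
  simp [Fin.succ_lt_succ_iff]

theorem permFixHat_extendFixingZero (e : Perm (Fin n)) :
    permFixHat (extendFixingZero e) = permFix e := by
  rw [permFixHat, permFix, card_filter, card_filter, Fin.sum_univ_succ]
  simp

theorem permDrop_extendFixingZero (e : Perm (Fin n)) :
    permDrop (extendFixingZero e) = permDrop e := by
  rw [permDrop, permDrop, card_filter, card_filter, Fin.sum_univ_succ]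
  simp [Fin.succ_lt_succ_iff]

theorem permCyc_extendFixingZero (e : Perm (Fin n)) :
    permCyc (extendFixingZero e) = permCyc e + 1 := by
  rw [permCyc, permCyc, permFix_eq_ite_add_permFixHat, permFixHat_extendFixingZero,
    extendFixingZero_zero, if_pos rfl, extendFixingZero, Perm.cycleType_extendDomain]
  omega

end Statistics

section Weights

variable {R : Type*} [CommRing R] (x y t α : R) {n : ℕ}

def cycWeight (σ : Perm (Fin n)) : R :=
  x ^ permExc σ * y ^ permDrop σ * t ^ permFix σ * α ^ permCyc σ

def cycWeightHat (σ : Perm (Fin n)) : R :=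
  x ^ permExcHat σ * y ^ permDrop σ * t ^ permFixHat σ * α ^ permCyc σ

theorem Acyc_eq_sum_cycWeight (m : ℕ) :
    Acyc R x y t α m = ∑ σ : Perm (Fin m), cycWeight x y t α σ :=
  rfl

theorem Fpoly_eq_sum_cycWeightHat (m : ℕ) :
    Fpoly R x y t α m = ∑ σ : Perm (Fin m), cycWeightHat x y t α σ :=
  rfl

theorem mul_cycWeightHat (σ : Perm (Fin (n + 1))) :
    x * cycWeightHat x y t α σ =
      cycWeight x y t α σ + if σ 0 = 0 then (x - t) * cycWeightHat x y t α σ else 0 := by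
  rw [cycWeight, cycWeightHat, permExc_eq_ite_add_permExcHat, permFix_eq_ite_add_permFixHat]
  by_cases h : σ 0 = 0
  · simp only [h, lt_self_iff_false, if_false, if_true]
    ring
  · simp only [Fin.pos_iff_ne_zero.mpr h, h, if_false, if_true]
    ring

theorem cycWeightHat_extendFixingZero (e : Perm (Fin n)) :
    cycWeightHat x y t α (extendFixingZero e) = α * cycWeight x y t α e := by
  rw [cycWeightHat, cycWeight, permExcHat_extendFixingZero, permFixHat_extendFixingZero,
    permDrop_extendFixingZero, permCyc_extendFixingZero, pow_succ]
  ring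

end Weights

/-- x·F_{n+1}(x,y,t|α) = A^{cyc}_{n+1}(x,y,t|α) + α(x−t)A^{cyc}_n(x,y,t|α). -/
theorem F_Acyc_relation (R : Type*) [CommRing R] (x y t α : R) (n : ℕ) :
    x * Fpoly R x y t α (n + 1) =
      Acyc R x y t α (n + 1) + α * (x - t) * Acyc R x y t α n := by
  calc x * Fpoly R x y t α (n + 1)
      = Acyc R x y t α (n + 1) + (x - t) * ∑ σ : Perm (Fin (n + 1)) with σ 0 = 0,
          cycWeightHat x y t α σ := by
        rw [Fpoly_eq_sum_cycWeightHat, mul_sum,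
          sum_congr rfl fun σ _ => mul_cycWeightHat x y t α σ, sum_add_distrib,
          ← sum_filter, mul_sum, Acyc_eq_sum_cycWeight]
    _ = Acyc R x y t α (n + 1) + α * (x - t) * Acyc R x y t α n := by
        rw [sum_filter_apply_zero_eq_zero, Acyc_eq_sum_cycWeight x y t α n, mul_sum, mul_sum]
        simp only [cycWeightHat_extendFixingZero, mul_left_comm (x - t), mul_assoc]
end

section
/- For nonnegative integers a, b with n = a+b, the identity Σ_{k≥0} (αt)^{a+b−k} C(a+b, k) ⟨k, a⟩_{α,t} = Σ_{k≥0} (αt)^{a+b−k} C(a+b, k) ⟨k, b⟩_{α,t} holds, where ⟨n,k⟩_{α,t} = Σ over σ ∈ S_n with exc(σ) = n−k of α^{cyc(σ)} t^{fix(σ)}, and ⟨0,k⟩_{α,t} = ⟨k,0⟩_{α,t} = δ_{k,0}. -/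
open Finset

/-- The (α,t)-Eulerian number ⟨n,k⟩_{α,t} = Σ_{σ ∈ S_n, exc σ = n−k} α^{cyc σ} t^{fix σ}
(the condition is stated as exc σ + k = n, so that ⟨0,k⟩ = ⟨k,0⟩ = δ_{k,0}). -/
def eulerAT (R : Type*) [CommRing R] (α t : R) (n k : ℕ) : R :=
  ∑ σ ∈ Finset.univ.filter (fun σ : Equiv.Perm (Fin n) => permExc σ + k = n),
    α ^ permCyc σ * t ^ permFix σ

/-!
Expanding `C(n, k)` as a sum over the `k`-subsets `S` of `Fin n`, and embedding `S_k` into `S_n`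
order-preservingly on `S` (which keeps excedances and cycles and adds `n - k` fixed points, each of
weight `α t`), the left side becomes `∑ σ, N_a(σ) α^cyc(σ) t^fix(σ)`, where `N_a(σ)` counts the sets
`S ⊇ supp σ` with `#S = exc σ + a`. Inversion preserves `cyc` and `fix` and satisfies
`exc σ + exc σ⁻¹ = #supp σ`, so `S ↦ supp σ ∪ Sᶜ` matches the sets counted by `N_a(σ⁻¹)` with those
counted by `N_b(σ)`.
-/

open Equiv

lemma permFix_add_card_support {n : ℕ} (σ : Perm (Fin n)) : permFix σ + #σ.support = n := by
  simpa [permFix, Perm.support] using card_filter_add_card_filter_not (s := univ) (fun i => σ i = i)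

def cycFixWeight {R : Type*} [Monoid R] (α t : R) {n : ℕ} (σ : Perm (Fin n)) : R :=
  α ^ permCyc σ * t ^ permFix σ

section ExtendDomain

variable {m n : ℕ} {S : Finset (Fin n)} (e : Fin m ≃o S) (τ : Perm (Fin m))

lemma extendDomain_orderIso_apply (j : Fin m) :
    τ.extendDomain e.toEquiv (e j) = e (τ j) :=
  Perm.extendDomain_apply_image τ e.toEquiv j

lemma filter_lt_extendDomain :
    univ.filter (fun x => x < τ.extendDomain e.toEquiv x) =
      (univ.filter fun j => j < τ j).map (e.toEmbedding.trans (Function.Embedding.subtype _)) := by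
  ext x
  by_cases hx : x ∈ S
  · obtain ⟨j, rfl⟩ : ∃ j, (e j : Fin n) = x := ⟨e.symm ⟨x, hx⟩, by simp⟩
    simp [extendDomain_orderIso_apply]
  · simp only [mem_filter, mem_univ, true_and, Perm.extendDomain_apply_not_subtype _ _ hx,
      lt_self_iff_false, false_iff, mem_map]
    rintro ⟨j, -, rfl⟩
    exact hx (e j).2

lemma support_extendDomain :
    (τ.extendDomain e.toEquiv).support =
      τ.support.map (e.toEmbedding.trans (Function.Embedding.subtype _)) := by
  ext x
  by_cases hx : x ∈ S
  · obtain ⟨j, rfl⟩ : ∃ j, (e j : Fin n) = x := ⟨e.symm ⟨x, hx⟩, by simp⟩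
    simp
  · simp

lemma permExc_extendDomain : permExc (τ.extendDomain e.toEquiv) = permExc τ := by
  rw [permExc, filter_lt_extendDomain, card_map, permExc]

lemma permFix_extendDomain :
    permFix (τ.extendDomain e.toEquiv) = permFix τ + (n - m) := by
  have hfix := permFix_add_card_support (τ.extendDomain e.toEquiv)
  have hfix' := permFix_add_card_support τ
  have hm : m ≤ n := by
    simpa using Fintype.card_le_of_embedding (e.toEmbedding.trans (Function.Embedding.subtype _))
  rw [support_extendDomain, card_map] at hfix
  omega

lemma permCyc_extendDomain :
    permCyc (τ.extendDomain e.toEquiv) = permCyc τ + (n - m) := by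
  rw [permCyc, permCyc, Perm.cycleType_extendDomain, permFix_extendDomain, add_assoc]

lemma cycFixWeight_extendDomain {R : Type*} [CommMonoid R] (α t : R) :
    cycFixWeight α t (τ.extendDomain e.toEquiv) = (α * t) ^ (n - m) * cycFixWeight α t τ := by
  rw [cycFixWeight, cycFixWeight, permCyc_extendDomain, permFix_extendDomain, pow_add, pow_add,
    mul_pow]
  ac_rfl

lemma exists_extendDomain_eq {σ : Perm (Fin n)} (h : σ.support ⊆ S) :
    ∃ τ : Perm (Fin m), τ.extendDomain e.toEquiv = σ := by
  obtain ⟨k, rfl⟩ := Perm.mem_range_ofSubtype_iff (p := (· ∈ S)).mpr (by simpa using h)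
  refine ⟨e.toEquiv.symm.permCongr k, Perm.ext fun x => ?_⟩
  by_cases hx : x ∈ S
  · simp [Perm.extendDomain_apply_subtype _ _ hx, Perm.ofSubtype_apply_of_mem _ hx]
  · simp [Perm.extendDomain_apply_not_subtype _ _ hx, Perm.ofSubtype_apply_of_not_mem _ hx]

end ExtendDomain

lemma sum_cycFixWeight_support_subset {R : Type*} [CommRing R] (α t : R) {n : ℕ}
    (S : Finset (Fin n)) (a : ℕ) :
    ∑ σ : Perm (Fin n) with σ.support ⊆ S ∧ permExc σ + a = #S, cycFixWeight α t σ =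
      (α * t) ^ (n - #S) * eulerAT R α t #S a := by
  let e := S.orderIsoOfFin rfl
  rw [eulerAT, mul_sum, eq_comm]
  refine sum_bij (fun τ _ => τ.extendDomain e.toEquiv) (fun τ hτ => ?_)
    (fun τ _ τ' _ h => Perm.extendDomainHom_injective e.toEquiv h) (fun σ hσ => ?_)
    (fun τ _ => (cycFixWeight_extendDomain e τ α t).symm)
  · rw [mem_filter] at hτ ⊢
    refine ⟨mem_univ _, ?_, by rw [permExc_extendDomain]; exact hτ.2⟩
    rw [support_extendDomain]
    intro x hx
    obtain ⟨j, -, rfl⟩ := mem_map.mp hx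
    exact (e j).2
  · obtain ⟨-, hsupp, hexc⟩ := mem_filter.mp hσ
    obtain ⟨τ, rfl⟩ := exists_extendDomain_eq e hsupp
    rw [permExc_extendDomain] at hexc
    exact ⟨τ, by simpa using hexc, rfl⟩

section Inverse

variable {n : ℕ} (σ : Perm (Fin n))

lemma permExc_add_permExc_inv : permExc σ + permExc σ⁻¹ = #σ.support := by
  have hinv :
      univ.filter (fun i => i < σ⁻¹ i) = (univ.filter fun i => σ i < i).map σ.toEmbedding := by
    ext i
    simp
  have hsupp : σ.support = univ.filter (fun i => i < σ i) ∪ univ.filter (fun i => σ i < i) := by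
    ext i
    simp [ne_comm]
  rw [permExc, permExc, hinv, card_map, hsupp, card_union_of_disjoint]
  exact disjoint_filter.mpr fun i _ h h' => lt_asymm h h'

lemma permFix_inv : permFix σ⁻¹ = permFix σ := by
  have h := permFix_add_card_support σ⁻¹
  rw [Perm.support_inv] at h
  have := permFix_add_card_support σ
  omega

lemma permCyc_inv : permCyc σ⁻¹ = permCyc σ := by
  rw [permCyc, permCyc, Perm.cycleType_inv, permFix_inv]

lemma cycFixWeight_inv {R : Type*} [Monoid R] (α t : R) :
    cycFixWeight α t σ⁻¹ = cycFixWeight α t σ := by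
  rw [cycFixWeight, cycFixWeight, permCyc_inv, permFix_inv]

def supportSupersets (a : ℕ) (σ : Perm (Fin n)) : Finset (Finset (Fin n)) :=
  univ.filter fun S => σ.support ⊆ S ∧ permExc σ + a = #S

lemma card_supportSupersets_inv {a b : ℕ} (hab : a + b = n) :
    #(supportSupersets a σ⁻¹) = #(supportSupersets b σ) := by
  have hexc := permExc_add_permExc_inv σ
  have hcard {S : Finset (Fin n)} (h : σ.support ⊆ S) :
      #(σ.support ∪ Sᶜ) + #S = #σ.support + n := by
    rw [card_union_of_disjoint (disjoint_compl_right.mono_left h), add_assoc, card_compl_add_card,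
      Fintype.card_fin]
  have hinvol {S : Finset (Fin n)} (h : σ.support ⊆ S) : σ.support ∪ (σ.support ∪ Sᶜ)ᶜ = S := by
    ext x
    have := @h x
    simp only [mem_union, mem_compl]
    tauto
  simp only [supportSupersets, Perm.support_inv]
  refine card_nbij' (fun S => σ.support ∪ Sᶜ) (fun S => σ.support ∪ Sᶜ) ?_ ?_
    (fun S hS => hinvol (mem_filter.mp hS).2.1) (fun S hS => hinvol (mem_filter.mp hS).2.1)
  all_goals
    intro S hS
    simp only [coe_filter, mem_univ, true_and, Set.mem_ofPred_eq] at hS ⊢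
    exact ⟨subset_union_left, by have := hcard hS.1; omega⟩

end Inverse

lemma sum_choose_mul_eulerAT {R : Type*} [CommRing R] (α t : R) (n a : ℕ) :
    ∑ k ∈ range (n + 1), (α * t) ^ (n - k) * (n.choose k : R) * eulerAT R α t k a =
      ∑ σ : Perm (Fin n), #(supportSupersets a σ) * cycFixWeight α t σ := by
  calc
    _ = ∑ S : Finset (Fin n), (α * t) ^ (n - #S) * eulerAT R α t #S a := by
      rw [← powerset_univ, sum_powerset_apply_card fun k => (α * t) ^ (n - k) * eulerAT R α t k a,
        card_univ, Fintype.card_fin]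
      refine sum_congr rfl fun k _ => ?_
      rw [nsmul_eq_mul]
      ring
    _ = ∑ S : Finset (Fin n), ∑ σ : Perm (Fin n) with σ.support ⊆ S ∧ permExc σ + a = #S,
          cycFixWeight α t σ := by
      simp_rw [sum_cycFixWeight_support_subset]
    _ = ∑ σ : Perm (Fin n), ∑ S ∈ supportSupersets a σ, cycFixWeight α t σ :=
      sum_comm' fun S σ => by simp [supportSupersets]
    _ = _ := by simp [sum_const, nsmul_eq_mul]

/-- The symmetric (α,t)-Eulerian identity:
Σ_k (αt)^{a+b−k} C(a+b,k) ⟨k,a⟩_{α,t} = Σ_k (αt)^{a+b−k} C(a+b,k) ⟨k,b⟩_{α,t}. -/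
theorem symmetric_alpha_t_eulerian_identity (a b : ℕ)
    (R : Type*) [CommRing R] (α t : R) :
    (∑ k ∈ Finset.range (a + b + 1),
        (α * t) ^ (a + b - k) * ((a + b).choose k : R) * eulerAT R α t k a) =
      ∑ k ∈ Finset.range (a + b + 1),
        (α * t) ^ (a + b - k) * ((a + b).choose k : R) * eulerAT R α t k b := by
  rw [sum_choose_mul_eulerAT, sum_choose_mul_eulerAT]
  refine Fintype.sum_equiv (Equiv.inv _) _ _ fun σ => ?_
  rw [Equiv.inv_apply, card_supportSupersets_inv σ (b.add_comm a), cycFixWeight_inv]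
end

section
/- For every n ≥ 1, the polynomial Ã_n(x,y,t|α) := Σ_{σ ∈ S_n} x^{exc σ} y^{drop σ} ((x+y)t)^{fix σ} α^{cyc σ} admits the gamma-expansion Ã_n(x,y,t|α) = Σ_{j=0}^{⌊n/2⌋} γ̃_{n,j}(α,t) (xy)^j (x+y)^{n−2j}, where γ̃_{n,j}(α,t) = Σ over σ ∈ S_n with cda(σ) = 0 and exc(σ) = j of α^{cyc(σ)} t^{fix(σ)}. -/
open Finset

/-- number of cycle double ascents: σ⁻¹(i) < i < σ(i) -/
def permCda {n : ℕ} (σ : Equiv.Perm (Fin n)) : ℕ :=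
  (Finset.univ.filter fun i : Fin n => σ⁻¹ i < i ∧ i < σ i).card

/-!
Valley hopping. If `x` is a cycle double ascent of `σ` (`σ⁻¹ x < x < σ x`), cut `x` out of its
cycle and reinsert it just before the first element below `x` that follows it along the cycle:
`x` becomes a cycle double descent, the status of every other letter (ascent, descent, valley,
peak, fixed point) is unchanged, and so is the number of cycles. Scanning backwards undoes the
hop, so hopping `x` is a bijection from the permutations in which `x` is a cycle double ascent
onto those in which it is a cycle double descent.

Hopping the letters one at a time, the permutations split into classes, each containing exactly
one `τ` without cycle double ascents, whose members are obtained by deciding independently for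
each cycle double descent of `τ` whether it hops. Since `exc = cda + valleys` and
`drop = cdd + valleys`, the weight of `σ` is `x ^ cda * y ^ cdd` times a factor constant on the
class, so the class of `τ` contributes `(x + y) ^ cdd τ` times that factor. Finally
`fix + exc + drop = n` and `valleys = exc` for `τ` give `cdd τ + fix τ = n - 2 exc τ`.
-/

structure IsHopping {X ι R : Type*} [DecidableEq ι] (D U : X → Finset ι) (f : X → R)
    (φ : ι → X → X) : Prop where
  disjoint : ∀ σ, Disjoint (D σ) (U σ)
  bijOn : ∀ a, Set.BijOn (φ a) {σ | a ∈ D σ} {σ | a ∈ U σ}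
  apply_D : ∀ a σ, a ∈ D σ → D (φ a σ) = (D σ).erase a
  apply_U : ∀ a σ, a ∈ D σ → U (φ a σ) = insert a (U σ)
  apply_f : ∀ a σ, a ∈ D σ → f (φ a σ) = f σ

namespace IsHopping

variable {X ι R : Type*} [DecidableEq ι] {D U : X → Finset ι} {f : X → R} {φ : ι → X → X}

theorem bijOn_disjoint_insert (h : IsHopping D U f φ) {A : Finset ι} {a : ι} (ha : a ∉ A) :
    Set.BijOn (φ a) {σ | Disjoint (D σ) A ∧ a ∈ D σ}
      {σ | Disjoint (D σ) (insert a A) ∧ a ∈ U σ} := by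
  refine ⟨fun σ hσ => ?_, (h.bijOn a).injOn.mono fun σ hσ => hσ.2, fun τ hτ => ?_⟩
  · refine ⟨?_, (h.bijOn a).mapsTo hσ.2⟩
    rw [h.apply_D a σ hσ.2, disjoint_insert_right]
    exact ⟨notMem_erase a _, disjoint_of_subset_left (erase_subset a _) hσ.1⟩
  · obtain ⟨σ, hσ, rfl⟩ := (h.bijOn a).surjOn hτ.2
    refine ⟨σ, ⟨?_, hσ⟩, rfl⟩
    rw [← insert_erase hσ, ← h.apply_D a σ hσ, disjoint_insert_left]
    exact ⟨ha, (disjoint_insert_right.1 hτ.1).2⟩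

variable [Fintype X] [CommSemiring R]

/-- Once the letters of `A` have hopped, each letter of `A` in `U σ` carries the weight `x + y`
of itself and of its hopped partner. -/
theorem sum_filter_disjoint_insert (h : IsHopping D U f φ) (x y : R) {A : Finset ι} {a : ι}
    (ha : a ∉ A) :
    ∑ σ with Disjoint (D σ) A, f σ * x ^ #(D σ) * y ^ #(U σ \ A) * (x + y) ^ #(U σ ∩ A) =
      ∑ σ with Disjoint (D σ) (insert a A),
        f σ * x ^ #(D σ) * y ^ #(U σ \ insert a A) * (x + y) ^ #(U σ ∩ insert a A) := by
  set S : Finset X := {σ | Disjoint (D σ) (insert a A)}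
  set w : X → R := fun σ => f σ * x ^ #(D σ) * y ^ #(U σ \ A) * (x + y) ^ #(U σ ∩ A)
  set v : X → R :=
    fun σ => f σ * x ^ (#(D σ) + 1) * y ^ #(U σ \ insert a A) * (x + y) ^ #(U σ ∩ A)
  have hsplit : ∑ σ with Disjoint (D σ) A, w σ =
      ∑ σ with Disjoint (D σ) A ∧ a ∈ D σ, w σ + ∑ σ ∈ S, w σ := by
    rw [← sum_filter_add_sum_filter_not _ (fun σ => a ∈ D σ), filter_filter, filter_filter]
    congr 2
    ext σ
    simp [S, disjoint_insert_right, and_comm]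
  have hhop : ∑ σ with Disjoint (D σ) A ∧ a ∈ D σ, w σ = ∑ σ ∈ S with a ∈ U σ, v σ := by
    have hb := h.bijOn_disjoint_insert ha
    rw [← coe_filter_univ, ← coe_filter_univ] at hb
    refine sum_nbij (φ a) (fun σ hσ => ?_) hb.injOn ?_ fun σ hσ => ?_
    · simpa [S, filter_filter] using hb.mapsTo hσ
    · simpa [S, filter_filter] using hb.surjOn
    · have haD := (mem_filter.1 hσ).2.2
      have haU : a ∉ U σ := disjoint_left.1 (h.disjoint σ) haD
      simp only [w, v, h.apply_f a σ haD, h.apply_D a σ haD, h.apply_U a σ haD,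
        card_erase_add_one haD, sdiff_insert, insert_sdiff_of_notMem _ ha,
        erase_insert (notMem_mono sdiff_subset haU), insert_inter_of_notMem ha]
  have hpoint : ∀ σ ∈ S,
      f σ * x ^ #(D σ) * y ^ #(U σ \ insert a A) * (x + y) ^ #(U σ ∩ insert a A) =
        w σ + if a ∈ U σ then v σ else 0 := by
    intro σ _
    by_cases haU : a ∈ U σ
    · have h₁ : #(U σ \ A) = #(U σ \ insert a A) + 1 := by
        rw [sdiff_insert, card_erase_add_one (mem_sdiff.2 ⟨haU, ha⟩)]
      rw [inter_insert_of_mem haU, card_insert_of_notMem (by simp [ha]), if_pos haU]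
      simp only [w, v, h₁]
      ring
    · rw [inter_insert_of_notMem haU, sdiff_insert, erase_eq_of_notMem (by simp [haU]), if_neg haU,
        add_zero]
  rw [hsplit, hhop, sum_congr rfl hpoint, sum_add_distrib, sum_ite, sum_const_zero, add_zero,
    add_comm]

theorem sum_mul_pow_mul_pow [Fintype ι] (h : IsHopping D U f φ) (x y : R) :
    ∑ σ, f σ * x ^ #(D σ) * y ^ #(U σ) = ∑ σ with D σ = ∅, f σ * (x + y) ^ #(U σ) := by
  have key : ∀ A : Finset ι, ∑ σ, f σ * x ^ #(D σ) * y ^ #(U σ) =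
      ∑ σ with Disjoint (D σ) A, f σ * x ^ #(D σ) * y ^ #(U σ \ A) * (x + y) ^ #(U σ ∩ A) := by
    intro A
    induction A using Finset.induction_on with
    | empty => simp
    | insert a A ha ih => rw [ih, h.sum_filter_disjoint_insert x y ha]
  rw [key univ]
  refine sum_congr (filter_congr fun σ _ => ?_) fun σ hσ => ?_
  · rw [← top_eq_univ, disjoint_top, bot_eq_empty]
  · simp [(mem_filter.1 hσ).2, sdiff_eq_empty_iff_subset.2 (subset_univ _)]

end IsHopping

namespace Equiv.Perm

variable {α : Type*}

theorem apply_inv_self (σ : Perm α) (x : α) : σ (σ⁻¹ x) = x := σ.apply_symm_apply x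

theorem inv_apply_self (σ : Perm α) (x : α) : σ⁻¹ (σ x) = x := σ.symm_apply_apply x

section Skip

variable [DecidableEq α] (σ : Perm α) (x : α)

def skip : Perm α := swap x (σ x) * σ

@[simp]
theorem skip_apply_self : σ.skip x x = x := by simp [skip]

@[simp]
theorem skip_apply_inv_self : σ.skip x (σ⁻¹ x) = σ x := by simp [skip]

theorem skip_apply_of_ne {y : α} (h₁ : y ≠ x) (h₂ : y ≠ σ⁻¹ x) : σ.skip x y = σ y := by
  rw [skip, mul_apply, swap_apply_of_ne_of_ne]
  · exact fun h => h₂ (eq_inv_iff_eq.2 h)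
  · exact fun h => h₁ (σ.injective h)

@[simp]
theorem inv_skip_apply_self : (σ.skip x)⁻¹ (σ x) = σ⁻¹ x := by
  rw [inv_eq_iff_eq, skip_apply_inv_self]

theorem skip_inv : σ⁻¹.skip x = (σ.skip x)⁻¹ := by
  rw [skip, skip, mul_inv_rev, swap_inv]
  calc swap x (σ⁻¹ x) * σ⁻¹ = swap (σ⁻¹ x) (σ⁻¹ (σ x)) * σ⁻¹ := by simp [swap_comm]
    _ = σ⁻¹ * swap x (σ x) := by rw [swap_apply_apply, inv_mul_cancel_right]

theorem skip_swap_mul {π : Perm α} {c : α} (hπ : π x = x) : (swap x c * π).skip x = π := by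
  simp [skip, hπ, ← mul_assoc]

end Skip

section FirstBelow

variable [LinearOrder α] {π : Perm α} {x s : α}

open Classical in
/-- Junk value `s` when the forward orbit of `s` never drops below `x`. -/
noncomputable def firstBelow (π : Perm α) (x s : α) : α :=
  if h : ∃ k, (π ^ k) s < x then (π ^ Nat.find h) s else s

theorem firstBelow_eq {k : ℕ} (hk : (π ^ k) s < x) (hmin : ∀ j < k, x ≤ (π ^ j) s) :
    π.firstBelow x s = (π ^ k) s := by
  have he : ∃ k, (π ^ k) s < x := ⟨k, hk⟩
  rw [firstBelow, dif_pos he, (Nat.find_eq_iff he).2 ⟨hk, fun j hj => not_lt.2 (hmin j hj)⟩]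

variable [Finite α]

theorem exists_pow_apply_lt (h : π⁻¹ s < x) : ∃ k, (π ^ k) s < x := by
  obtain ⟨k, -, hk⟩ := (show π.SameCycle s (π⁻¹ s) from ⟨-1, by simp⟩).exists_pow_eq'
  exact ⟨k, hk ▸ h⟩

theorem exists_firstBelow_eq (h : π⁻¹ s < x) :
    ∃ k, π.firstBelow x s = (π ^ k) s ∧ (π ^ k) s < x ∧ ∀ j < k, x ≤ (π ^ j) s := by
  have he := exists_pow_apply_lt h
  exact ⟨Nat.find he, by rw [firstBelow, dif_pos he], Nat.find_spec he,
    fun j hj => not_lt.1 (Nat.find_min he hj)⟩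

theorem firstBelow_lt (h : π⁻¹ s < x) : π.firstBelow x s < x := by
  obtain ⟨k, hk, hlt, -⟩ := exists_firstBelow_eq h
  exact hk ▸ hlt

theorem le_inv_firstBelow (h : π⁻¹ s < x) (hs : x ≤ s) : x ≤ π⁻¹ (π.firstBelow x s) := by
  obtain ⟨k, hk, hlt, hmin⟩ := exists_firstBelow_eq h
  obtain _ | k := k
  · exact absurd hlt (by simpa using hs)
  · simpa [hk, pow_succ'] using hmin k k.lt_succ_self

/-- Scanning backwards from the point before the landing point retraces the forward scan. -/
theorem firstBelow_inv (h : π⁻¹ s < x) :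
    π⁻¹.firstBelow x (π⁻¹ (π.firstBelow x s)) = π⁻¹ s := by
  obtain ⟨k, hk, -, hmin⟩ := exists_firstBelow_eq h
  have hpow : ∀ j m, (π⁻¹ ^ j) (π⁻¹ ((π ^ (j + m)) s)) = π⁻¹ ((π ^ m) s) := by
    intro j m
    rw [← mul_apply, ← mul_apply, ← mul_apply]
    congr 1
    group
  have hlast := hpow k 0
  rw [add_zero, pow_zero, one_apply] at hlast
  rw [hk, firstBelow_eq (k := k)]
  · exact hlast
  · exact hlast ▸ h
  · intro j hj
    obtain ⟨m, rfl⟩ := Nat.exists_eq_add_of_lt hj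
    rw [add_assoc, hpow, pow_succ', mul_apply, ← mul_apply π⁻¹, inv_mul_cancel, one_apply]
    exact hmin m (by omega)

end FirstBelow

theorem card_cycleType_skip [DecidableEq α] [Fintype α] {σ : Perm α} {x : α} (h : σ (σ x) ≠ x) :
    (σ.skip x).cycleType.card = σ.cycleType.card := by
  have hx : σ x ≠ x := fun e => h (by rw [e, e])
  set f := σ.cycleOf x
  have hf : f ∈ σ.cycleFactorsFinset := cycleOf_mem_cycleFactorsFinset_iff.2 (mem_support.2 hx)
  have hfx : f x = σ x := cycleOf_apply_self σ x
  have hffx : f (f x) = σ (σ x) := by rw [hfx, cycleOf_apply_apply_self]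
  have hd : Disjoint f (σ * f⁻¹) := (disjoint_mul_inv_of_mem_cycleFactorsFinset hf).symm
  have hσ : σ = f * (σ * f⁻¹) := by rw [hd.commute.eq, inv_mul_cancel_right]
  have hcyc : IsCycle (swap x (f x) * f) := (isCycle_cycleOf σ hx).swap_mul (hfx ▸ hx) (hffx ▸ h)
  have hd' : Disjoint (swap x (f x) * f) (σ * f⁻¹) :=
    hd.mono (by rw [support_swap_mul_eq f x (hffx ▸ h)]; exact sdiff_subset) subset_rfl
  have hskip : σ.skip x = swap x (f x) * f * (σ * f⁻¹) := by
    rw [skip, hfx, mul_assoc, ← hσ]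
  rw [hskip, hd'.cycleType_mul, hcyc.cycleType]
  conv_rhs => rw [hσ, hd.cycleType_mul, (isCycle_cycleOf σ hx).cycleType]
  simp

section Hop

variable [LinearOrder α] {σ : Perm α} {x y : α}

/-- Cut `x` out of its cycle and reinsert it just before the first element below `x` after it. -/
noncomputable def hop (σ : Perm α) (x : α) : Perm α :=
  swap x ((σ.skip x).firstBelow x (σ x)) * σ.skip x

theorem hop_apply_self : σ.hop x x = (σ.skip x).firstBelow x (σ x) := by
  simp [hop]

theorem inv_hop_apply_self : (σ.hop x)⁻¹ x = (σ.skip x)⁻¹ (σ.hop x x) := by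
  simp [hop]

theorem skip_hop : (σ.hop x).skip x = σ.skip x :=
  skip_swap_mul x (skip_apply_self σ x)

variable [Finite α] (hx : σ⁻¹ x < x ∧ x < σ x)
include hx

theorem hop_apply_self_lt : σ.hop x x < x := by
  rw [hop_apply_self]
  exact firstBelow_lt (by simpa using hx.1)

theorem lt_inv_hop_apply_self : x < (σ.hop x)⁻¹ x := by
  refine lt_of_le_of_ne ?_ fun h => (hop_apply_self_lt hx).ne ?_
  · rw [inv_hop_apply_self, hop_apply_self]
    exact le_inv_firstBelow (by simpa using hx.1) hx.2.le
  · rw [inv_hop_apply_self, eq_comm, inv_eq_iff_eq, skip_apply_self] at h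
    exact h

theorem apply_inv_hop_apply_self : σ ((σ.hop x)⁻¹ x) = σ.hop x x := by
  have hb := lt_inv_hop_apply_self hx
  rw [← skip_apply_of_ne σ x hb.ne' (hx.1.trans hb).ne', inv_hop_apply_self, apply_inv_self]

theorem hop_apply_inv_self : σ.hop x (σ⁻¹ x) = σ x := by
  rw [hop, mul_apply, skip_apply_inv_self, ← hop_apply_self,
    swap_apply_of_ne_of_ne hx.2.ne' ((hop_apply_self_lt hx).trans hx.2).ne']

theorem hop_apply_of_ne (h₁ : y ≠ x) (h₂ : y ≠ σ⁻¹ x) (h₃ : y ≠ (σ.hop x)⁻¹ x) :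
    σ.hop x y = σ y := by
  rw [hop, mul_apply, skip_apply_of_ne σ x h₁ h₂, ← hop_apply_self, swap_apply_of_ne_of_ne]
  · exact fun h => h₂ (eq_inv_iff_eq.2 h)
  · rw [← apply_inv_hop_apply_self hx]
    exact fun h => h₃ (σ.injective h)

theorem hop_inv_hop : (σ.hop x)⁻¹.hop x = σ⁻¹ := by
  have hs : (σ.skip x)⁻¹ (σ x) < x := by simpa using hx.1
  calc (σ.hop x)⁻¹.hop x = swap x (σ⁻¹ x) * σ⁻¹.skip x := by
        rw [hop, skip_inv, skip_hop, inv_hop_apply_self, hop_apply_self, firstBelow_inv hs,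
          inv_skip_apply_self, skip_inv]
    _ = σ⁻¹ := by rw [skip, swap_mul_self_mul]

theorem cmp_hop_apply (hy : y ≠ x) : cmp (σ.hop x y) y = cmp (σ y) y := by
  rcases eq_or_ne y (σ⁻¹ x) with rfl | h₂
  · rw [hop_apply_inv_self hx, apply_inv_self, (cmp_eq_gt_iff _ _).2 hx.1,
      (cmp_eq_gt_iff _ _).2 (hx.1.trans hx.2)]
  rcases eq_or_ne y ((σ.hop x)⁻¹ x) with rfl | h₃
  · have hb := lt_inv_hop_apply_self hx
    rw [apply_inv_hop_apply_self hx, apply_inv_self, (cmp_eq_lt_iff _ _).2 hb,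
      (cmp_eq_lt_iff _ _).2 ((hop_apply_self_lt hx).trans hb)]
  · rw [hop_apply_of_ne hx hy h₂ h₃]

theorem cmp_inv_hop_apply (hy : y ≠ x) : cmp ((σ.hop x)⁻¹ y) y = cmp (σ⁻¹ y) y := by
  have hc := hop_apply_self_lt hx
  have hb := lt_inv_hop_apply_self hx
  rcases eq_or_ne y (σ x) with rfl | h₂
  · rw [inv_eq_iff_eq.2 (hop_apply_inv_self hx).symm, inv_apply_self,
      (cmp_eq_lt_iff _ _).2 (hx.1.trans hx.2), (cmp_eq_lt_iff _ _).2 hx.2]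
  rcases eq_or_ne y (σ.hop x x) with rfl | h₃
  · have e : σ⁻¹ (σ.hop x x) = (σ.hop x)⁻¹ x := by rw [inv_eq_iff_eq, apply_inv_hop_apply_self hx]
    rw [inv_apply_self, e, (cmp_eq_gt_iff _ _).2 hc, (cmp_eq_gt_iff _ _).2 (hc.trans hb)]
  · suffices (σ.hop x)⁻¹ y = σ⁻¹ y by rw [this]
    rw [inv_eq_iff_eq, hop_apply_of_ne hx, apply_inv_self]
    · exact fun h => h₂ (by rw [← h, apply_inv_self])
    · exact fun h => hy (by rw [← apply_inv_self σ y, h, apply_inv_self])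
    · exact fun h => h₃ (by rw [← apply_inv_hop_apply_self hx, ← h, apply_inv_self])

end Hop

section Statistics

variable [LinearOrder α] [Fintype α] {σ : Perm α} {x : α}

def cycleDoubleAscents (σ : Perm α) : Finset α := {i | σ⁻¹ i < i ∧ i < σ i}

def cycleDoubleDescents (σ : Perm α) : Finset α := {i | σ i < i ∧ i < σ⁻¹ i}

def cycleValleys (σ : Perm α) : Finset α := {i | i < σ i ∧ i < σ⁻¹ i}

@[simp]
theorem mem_cycleDoubleAscents : x ∈ σ.cycleDoubleAscents ↔ σ⁻¹ x < x ∧ x < σ x := by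
  simp [cycleDoubleAscents]

@[simp]
theorem mem_cycleDoubleDescents : x ∈ σ.cycleDoubleDescents ↔ σ x < x ∧ x < σ⁻¹ x := by
  simp [cycleDoubleDescents]

@[simp]
theorem mem_cycleValleys : x ∈ σ.cycleValleys ↔ x < σ x ∧ x < σ⁻¹ x := by
  simp [cycleValleys]

theorem cycleDoubleAscents_inv : σ⁻¹.cycleDoubleAscents = σ.cycleDoubleDescents := by
  ext; simp [and_comm]

theorem cycleValleys_inv : σ⁻¹.cycleValleys = σ.cycleValleys := by
  ext; simp [and_comm]

theorem disjoint_cycleDoubleAscents_cycleDoubleDescents :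
    _root_.Disjoint σ.cycleDoubleAscents σ.cycleDoubleDescents :=
  disjoint_left.2 fun _ ha hd =>
    (mem_cycleDoubleAscents.1 ha).2.not_gt (mem_cycleDoubleDescents.1 hd).1

section

variable (hx : x ∈ σ.cycleDoubleAscents)
include hx

theorem cycleDoubleAscents_hop : (σ.hop x).cycleDoubleAscents = σ.cycleDoubleAscents.erase x := by
  rw [mem_cycleDoubleAscents] at hx
  ext y
  rcases eq_or_ne y x with rfl | hy
  · simp [(hop_apply_self_lt hx).not_gt]
  · have h₁ := cmp_eq_cmp_symm.1 (cmp_hop_apply hx hy)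
    have h₂ := cmp_inv_hop_apply hx hy
    simp only [mem_erase, mem_cycleDoubleAscents, lt_iff_lt_of_cmp_eq_cmp h₁,
      lt_iff_lt_of_cmp_eq_cmp h₂, hy, ne_eq, not_false_eq_true, true_and]

theorem cycleDoubleDescents_hop :
    (σ.hop x).cycleDoubleDescents = insert x σ.cycleDoubleDescents := by
  rw [mem_cycleDoubleAscents] at hx
  ext y
  rcases eq_or_ne y x with rfl | hy
  · simp only [mem_insert, true_or, iff_true, mem_cycleDoubleDescents]
    exact ⟨hop_apply_self_lt hx, lt_inv_hop_apply_self hx⟩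
  · have h₁ := cmp_hop_apply hx hy
    have h₂ := cmp_eq_cmp_symm.1 (cmp_inv_hop_apply hx hy)
    simp only [mem_insert, mem_cycleDoubleDescents, lt_iff_lt_of_cmp_eq_cmp h₁,
      lt_iff_lt_of_cmp_eq_cmp h₂, hy, false_or]

theorem cycleValleys_hop : (σ.hop x).cycleValleys = σ.cycleValleys := by
  rw [mem_cycleDoubleAscents] at hx
  ext y
  rcases eq_or_ne y x with rfl | hy
  · simp only [mem_cycleValleys]
    exact iff_of_false (fun h => h.1.not_gt (hop_apply_self_lt hx)) fun h => h.2.not_gt hx.1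
  · have h₁ := cmp_eq_cmp_symm.1 (cmp_hop_apply hx hy)
    have h₂ := cmp_eq_cmp_symm.1 (cmp_inv_hop_apply hx hy)
    simp only [mem_cycleValleys, lt_iff_lt_of_cmp_eq_cmp h₁, lt_iff_lt_of_cmp_eq_cmp h₂]

theorem filter_hop_apply_eq_self :
    ({y | σ.hop x y = y} : Finset α) = ({y | σ y = y} : Finset α) := by
  rw [mem_cycleDoubleAscents] at hx
  ext y
  rcases eq_or_ne y x with rfl | hy
  · simp [(hop_apply_self_lt hx).ne, hx.2.ne']
  · simp only [mem_filter, mem_univ, true_and]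
    exact eq_iff_eq_of_cmp_eq_cmp (cmp_hop_apply hx hy)

theorem card_cycleType_hop : (σ.hop x).cycleType.card = σ.cycleType.card := by
  rw [mem_cycleDoubleAscents] at hx
  have hτ : σ.hop x (σ.hop x x) ≠ x := fun h =>
    (hop_apply_self_lt hx).not_gt (eq_inv_iff_eq.2 h ▸ lt_inv_hop_apply_self hx)
  have hσ : σ (σ x) ≠ x := fun h => hx.1.not_gt (eq_inv_iff_eq.2 h ▸ hx.2)
  rw [← card_cycleType_skip hτ, skip_hop, card_cycleType_skip hσ]

end

theorem bijOn_hop (x : α) :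
    Set.BijOn (fun σ : Perm α => σ.hop x) {σ | x ∈ σ.cycleDoubleAscents}
      {σ | x ∈ σ.cycleDoubleDescents} := by
  refine Set.InvOn.bijOn (f' := fun σ => (σ⁻¹.hop x)⁻¹) ⟨fun σ hσ => ?_, fun σ hσ => ?_⟩
    (fun σ hσ => ?_) (fun σ hσ => ?_)
  · simp only [hop_inv_hop (mem_cycleDoubleAscents.1 hσ), inv_inv]
  · rw [Set.mem_ofPred_eq, ← cycleDoubleAscents_inv, mem_cycleDoubleAscents] at hσ
    simpa using hop_inv_hop hσ
  · show x ∈ (σ.hop x).cycleDoubleDescents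
    rw [cycleDoubleDescents_hop hσ]
    exact mem_insert_self x _
  · rw [Set.mem_ofPred_eq, ← cycleDoubleAscents_inv] at hσ
    show x ∈ (σ⁻¹.hop x)⁻¹.cycleDoubleAscents
    rw [cycleDoubleAscents_inv, cycleDoubleDescents_hop hσ]
    exact mem_insert_self x _

end Statistics

end Equiv.Perm

section PermStatistics

open Equiv Perm

variable {n : ℕ} (σ : Perm (Fin n))

theorem permExc_eq_card_add_card : permExc σ = #σ.cycleDoubleAscents + #σ.cycleValleys := by
  rw [permExc, ← card_filter_add_card_filter_not (p := fun i => σ⁻¹ i < i), filter_filter,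
    filter_filter]
  congr 2 <;> ext i <;> simp only [mem_filter, mem_univ, true_and, mem_cycleDoubleAscents,
    mem_cycleValleys, not_lt]
  · exact and_comm
  · exact ⟨fun h => ⟨h.1, h.2.lt_of_ne fun e => h.1.ne' (eq_inv_iff_eq.1 e)⟩,
      fun h => ⟨h.1, h.2.le⟩⟩

theorem permDrop_eq_permExc_inv : permDrop σ = permExc σ⁻¹ := by
  refine card_nbij' (fun i => σ i) (fun i => σ⁻¹ i) (fun i hi => ?_) (fun i hi => ?_)
    (fun i _ => inv_apply_self σ i) (fun i _ => apply_inv_self σ i)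
  · simpa [inv_apply_self] using hi
  · simpa [apply_inv_self] using hi

theorem permDrop_eq_card_add_card : permDrop σ = #σ.cycleDoubleDescents + #σ.cycleValleys := by
  rw [permDrop_eq_permExc_inv, permExc_eq_card_add_card, cycleDoubleAscents_inv, cycleValleys_inv]

theorem permFix_add_permExc_add_permDrop : permFix σ + permExc σ + permDrop σ = n := by
  simp only [permFix, permExc, permDrop, card_filter, ← sum_add_distrib]
  calc _ = ∑ _i : Fin n, 1 := sum_congr rfl fun i _ => by split_ifs <;> omega
    _ = n := by simp

theorem permFix_add_card_add_two_mul_permExc (h : σ.cycleDoubleAscents = ∅) :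
    permFix σ + #σ.cycleDoubleDescents + 2 * permExc σ = n := by
  have := permFix_add_permExc_add_permDrop σ
  rw [permDrop_eq_card_add_card, permExc_eq_card_add_card, h, card_empty] at *
  omega

theorem two_mul_permExc_le (h : σ.cycleDoubleAscents = ∅) : 2 * permExc σ ≤ n := by
  have := permFix_add_card_add_two_mul_permExc σ h
  omega

theorem sub_two_mul_permExc (h : σ.cycleDoubleAscents = ∅) :
    n - 2 * permExc σ = permFix σ + #σ.cycleDoubleDescents := by
  have := permFix_add_card_add_two_mul_permExc σ h
  omega

theorem card_cycleValleys_eq_permExc (h : σ.cycleDoubleAscents = ∅) :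
    #σ.cycleValleys = permExc σ := by
  rw [permExc_eq_card_add_card, h, card_empty, zero_add]

section

variable {σ} {x : Fin n} (hx : x ∈ σ.cycleDoubleAscents)
include hx

theorem permFix_hop : permFix (σ.hop x) = permFix σ := by
  rw [permFix, permFix, filter_hop_apply_eq_self hx]

theorem permCyc_hop : permCyc (σ.hop x) = permCyc σ := by
  rw [permCyc, permCyc, card_cycleType_hop hx, permFix_hop hx]

end

theorem isHopping_hop {R : Type*} (g : ℕ → ℕ → ℕ → R) :
    IsHopping cycleDoubleAscents cycleDoubleDescents
      (fun σ : Perm (Fin n) => g #σ.cycleValleys (permFix σ) (permCyc σ)) fun a σ => σ.hop a where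
  disjoint _ := disjoint_cycleDoubleAscents_cycleDoubleDescents
  bijOn := bijOn_hop
  apply_D _ _ := cycleDoubleAscents_hop
  apply_U _ _ := cycleDoubleDescents_hop
  apply_f _ _ ha := by simp only [cycleValleys_hop ha, permFix_hop ha, permCyc_hop ha]

end PermStatistics

theorem gamma_expansion_binomial_eulerian_general (n : ℕ)
    (R : Type*) [CommRing R] (x y t α : R) :
    ∑ σ : Equiv.Perm (Fin n),
        x ^ permExc σ * y ^ permDrop σ * ((x + y) * t) ^ permFix σ * α ^ permCyc σ =
      ∑ j ∈ Finset.range (n / 2 + 1),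
        (∑ σ ∈ Finset.univ.filter
            (fun σ : Equiv.Perm (Fin n) => permCda σ = 0 ∧ permExc σ = j),
          α ^ permCyc σ * t ^ permFix σ) * (x * y) ^ j * (x + y) ^ (n - 2 * j) := by
  open Equiv Perm in
  set f : Perm (Fin n) → R := fun σ =>
    (x * y) ^ #σ.cycleValleys * ((x + y) * t) ^ permFix σ * α ^ permCyc σ
  have hcda (σ : Perm (Fin n)) : permCda σ = 0 ↔ σ.cycleDoubleAscents = ∅ := card_eq_zero
  calc _ = ∑ σ, f σ * x ^ #σ.cycleDoubleAscents * y ^ #σ.cycleDoubleDescents := by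
        refine sum_congr rfl fun σ _ => ?_
        rw [permExc_eq_card_add_card, permDrop_eq_card_add_card]
        ring
    _ = ∑ σ with σ.cycleDoubleAscents = ∅, f σ * (x + y) ^ #σ.cycleDoubleDescents :=
        (isHopping_hop fun v c k => (x * y) ^ v * ((x + y) * t) ^ c * α ^ k).sum_mul_pow_mul_pow x y
    _ = ∑ σ with permCda σ = 0,
          α ^ permCyc σ * t ^ permFix σ * (x * y) ^ permExc σ * (x + y) ^ (n - 2 * permExc σ) := by
        refine sum_congr (filter_congr fun σ _ => (hcda σ).symm) fun σ hσ => ?_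
        have h := (hcda σ).1 (mem_filter.1 hσ).2
        rw [sub_two_mul_permExc σ h, ← card_cycleValleys_eq_permExc σ h]
        simp only [f, pow_add, mul_pow]
        ring
    _ = _ := by
        rw [← sum_fiberwise_of_maps_to (g := permExc) (t := range (n / 2 + 1)) fun σ hσ =>
          mem_range.2 (by have := two_mul_permExc_le σ ((hcda σ).1 (mem_filter.1 hσ).2); omega)]
        refine sum_congr rfl fun j _ => ?_
        rw [filter_filter, sum_mul, sum_mul]
        exact sum_congr rfl fun σ hσ => by rw [(mem_filter.1 hσ).2.2]

/-- Gamma-expansion of the (α,t)-binomial-Eulerian polynomial: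
Ã_n(x,y,t|α) = Σ_j γ̃_{n,j}(α,t)(xy)^j(x+y)^{n−2j} with
γ̃_{n,j}(α,t) = Σ_{σ ∈ S_n, cda σ = 0, exc σ = j} α^{cyc σ} t^{fix σ}. -/
theorem gamma_expansion_binomial_eulerian (n : ℕ) (hn : 1 ≤ n)
    (R : Type*) [CommRing R] (x y t α : R) :
    ∑ σ : Equiv.Perm (Fin n),
        x ^ permExc σ * y ^ permDrop σ * ((x + y) * t) ^ permFix σ * α ^ permCyc σ =
      ∑ j ∈ Finset.range (n / 2 + 1),
        (∑ σ ∈ Finset.univ.filter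
            (fun σ : Equiv.Perm (Fin n) => permCda σ = 0 ∧ permExc σ = j),
          α ^ permCyc σ * t ^ permFix σ) * (x * y) ^ j * (x + y) ^ (n - 2 * j) :=
  gamma_expansion_binomial_eulerian_general n R x y t α
end
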